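/- arXiv:2511.22000 — 12 statements merged into one kernel-verified Lean document; each statement's English description precedes it below -/
import Mathlib

section
/- Let E be a real normed vector space, τ > 0, n ≥ 1, and let (m_j)_{0≤j≤n} and (v_j)_{0≤j≤n−1} be sequences in E satisfying v_0 = d_t m_1 and 2 v_j = 3 d_t m_{j+1} − d_t m_j for 1 ≤ j ≤ n−1. Then √(1/5) · (τ Σ_{j=0}^{n−1} ‖v_j‖²)^{1/2} ≤ (τ Σ_{j=0}^{n−1} ‖d_t m_{j+1}‖²)^{1/2} ≤ √(9/7) · (τ Σ_{j=0}^{n−1} ‖v_j‖²)^{1/2}. -/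
/-- Norm equivalence (Lemma 3.3): if `v 0 = d_t m 1` and `2 v j = 3 d_t m (j+1) - d_t m j`
for `1 ≤ j ≤ n-1`, then
`√(1/5) (τ Σ_{j<n} ‖v j‖²)^{1/2} ≤ (τ Σ_{j<n} ‖d_t m (j+1)‖²)^{1/2}
  ≤ √(9/7) (τ Σ_{j<n} ‖v j‖²)^{1/2}`,
where `d_t m (j+1) = τ⁻¹ • (m (j+1) - m j)`. -/
theorem bdf2_norm_equivalence {E : Type*} [NormedAddCommGroup E] [NormedSpace ℝ E]
    (τ : ℝ) (hτ : 0 < τ) (n : ℕ) (hn : 1 ≤ n) (m v : ℕ → E)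
    (hv0 : v 0 = τ⁻¹ • (m 1 - m 0))
    (hvj : ∀ j : ℕ, 1 ≤ j → j ≤ n - 1 →
      (2 : ℝ) • v j = (3 : ℝ) • (τ⁻¹ • (m (j + 1) - m j)) - τ⁻¹ • (m j - m (j - 1))) :
    Real.sqrt (1/5) * Real.sqrt (τ * ∑ j ∈ Finset.range n, ‖v j‖ ^ 2)
        ≤ Real.sqrt (τ * ∑ j ∈ Finset.range n, ‖τ⁻¹ • (m (j + 1) - m j)‖ ^ 2) ∧
    Real.sqrt (τ * ∑ j ∈ Finset.range n, ‖τ⁻¹ • (m (j + 1) - m j)‖ ^ 2)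
        ≤ Real.sqrt (9/7) * Real.sqrt (τ * ∑ j ∈ Finset.range n, ‖v j‖ ^ 2) := by
  set u : ℕ → E := fun j => τ⁻¹ • (m (j + 1) - m j) with hu
  -- pointwise estimates
  have key : ∀ j : ℕ, 1 ≤ j → j ≤ n - 1 →
      ‖v j‖ ^ 2 ≤ 9/2 * ‖u j‖ ^ 2 + 1/2 * ‖u (j-1)‖ ^ 2 ∧
      ‖u j‖ ^ 2 ≤ ‖v j‖ ^ 2 + 1/5 * ‖u (j-1)‖ ^ 2 := by
    intro j h1 h2
    have h := hvj j h1 h2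
    have hw : τ⁻¹ • (m j - m (j - 1)) = u (j - 1) := by
      have hj : j - 1 + 1 = j := by omega
      simp only [hu, hj]
    rw [hw] at h
    have h3 : (3 : ℝ) • u j = (2 : ℝ) • v j + u (j - 1) := by
      rw [h]; abel
    have e2 : ‖(2 : ℝ) • v j‖ = 2 * ‖v j‖ := by
      rw [norm_smul]; simp
    have e3 : ‖(3 : ℝ) • u j‖ = 3 * ‖u j‖ := by
      rw [norm_smul]; simp
    have ha : 2 * ‖v j‖ ≤ 3 * ‖u j‖ + ‖u (j - 1)‖ := by
      calc 2 * ‖v j‖ = ‖(2 : ℝ) • v j‖ := e2.symm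
        _ = ‖(3 : ℝ) • u j - u (j - 1)‖ := by rw [h]
        _ ≤ ‖(3 : ℝ) • u j‖ + ‖u (j - 1)‖ := norm_sub_le _ _
        _ = 3 * ‖u j‖ + ‖u (j - 1)‖ := by rw [e3]
    have hb : 3 * ‖u j‖ ≤ 2 * ‖v j‖ + ‖u (j - 1)‖ := by
      calc 3 * ‖u j‖ = ‖(3 : ℝ) • u j‖ := e3.symm
        _ = ‖(2 : ℝ) • v j + u (j - 1)‖ := by rw [h3]
        _ ≤ ‖(2 : ℝ) • v j‖ + ‖u (j - 1)‖ := norm_add_le _ _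
        _ = 2 * ‖v j‖ + ‖u (j - 1)‖ := by rw [e2]
    constructor
    · nlinarith [norm_nonneg (v j), norm_nonneg (u j), norm_nonneg (u (j - 1)),
        sq_nonneg (3 * ‖u j‖ - ‖u (j - 1)‖)]
    · nlinarith [norm_nonneg (v j), norm_nonneg (u j), norm_nonneg (u (j - 1)),
        sq_nonneg (5 * ‖v j‖ - 2 * ‖u (j - 1)‖)]
  obtain ⟨k, rfl⟩ : ∃ k, n = k + 1 := ⟨n - 1, by omega⟩
  have hv0n : ‖v 0‖ = ‖u 0‖ := by rw [hv0]
  set Su := ∑ j ∈ Finset.range (k + 1), ‖u j‖ ^ 2 with hSu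
  set Sv := ∑ j ∈ Finset.range (k + 1), ‖v j‖ ^ 2 with hSv
  have hSunn : 0 ≤ Su := Finset.sum_nonneg fun i _ => sq_nonneg _
  have hSvnn : 0 ≤ Sv := Finset.sum_nonneg fun i _ => sq_nonneg _
  have hsplit_u : Su = (∑ i ∈ Finset.range k, ‖u (i + 1)‖ ^ 2) + ‖u 0‖ ^ 2 :=
    Finset.sum_range_succ' _ _
  have hsplit_v : Sv = (∑ i ∈ Finset.range k, ‖v (i + 1)‖ ^ 2) + ‖v 0‖ ^ 2 :=
    Finset.sum_range_succ' _ _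
  have hsub : ∑ i ∈ Finset.range k, ‖u i‖ ^ 2 ≤ Su := by
    apply Finset.sum_le_sum_of_subset_of_nonneg
    · exact Finset.range_subset_range.2 (by omega)
    · intro i _ _; exact sq_nonneg _
  have keyi : ∀ i ∈ Finset.range k, 1 ≤ i + 1 ∧ i + 1 ≤ k + 1 - 1 := by
    intro i hi
    simp only [Finset.mem_range] at hi
    omega
  have Svu : Sv ≤ 5 * Su := by
    have hb : ∑ i ∈ Finset.range k, ‖v (i + 1)‖ ^ 2 ≤
        ∑ i ∈ Finset.range k, (9/2 * ‖u (i + 1)‖ ^ 2 + 1/2 * ‖u i‖ ^ 2) := by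
      apply Finset.sum_le_sum
      intro i hi
      obtain ⟨h1, h2⟩ := keyi i hi
      have := (key (i + 1) h1 h2).1
      simpa using this
    rw [Finset.sum_add_distrib, ← Finset.mul_sum, ← Finset.mul_sum] at hb
    have h1 : ∑ i ∈ Finset.range k, ‖u (i + 1)‖ ^ 2 = Su - ‖u 0‖ ^ 2 := by
      rw [hsplit_u]; ring
    rw [h1] at hb
    have := sq_nonneg ‖u 0‖
    rw [hsplit_v, hv0n]
    linarith
  have Suv : Su ≤ 9/7 * Sv := by
    have hb : ∑ i ∈ Finset.range k, ‖u (i + 1)‖ ^ 2 ≤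
        ∑ i ∈ Finset.range k, (‖v (i + 1)‖ ^ 2 + 1/5 * ‖u i‖ ^ 2) := by
      apply Finset.sum_le_sum
      intro i hi
      obtain ⟨h1, h2⟩ := keyi i hi
      have := (key (i + 1) h1 h2).2
      simpa using this
    rw [Finset.sum_add_distrib, ← Finset.mul_sum] at hb
    have h1 : ∑ i ∈ Finset.range k, ‖v (i + 1)‖ ^ 2 = Sv - ‖v 0‖ ^ 2 := by
      rw [hsplit_v]; ring
    rw [h1] at hb
    have := sq_nonneg ‖u 0‖
    rw [hsplit_u]
    have h2 : (∑ i ∈ Finset.range k, ‖u (i+1)‖ ^ 2) + ‖u 0‖ ^ 2 = Su := hsplit_u.symm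
    -- Su ≤ Sv + (1/5) Su  ⇒ Su ≤ (5/4) Sv ≤ (9/7) Sv
    rw [hv0n] at hb
    nlinarith [hsub]
  constructor
  · rw [← Real.sqrt_mul (by norm_num : (0:ℝ) ≤ 1/5)]
    apply Real.sqrt_le_sqrt
    nlinarith
  · rw [← Real.sqrt_mul (by norm_num : (0:ℝ) ≤ 9/7)]
    apply Real.sqrt_le_sqrt
    nlinarith
end

section
/- Let E be a real normed vector space, τ > 0, n ≥ 1, and let (m_j)_{0≤j≤n} and (v_j)_{0≤j≤n−1} be sequences in E satisfying v_0 = d_t m_1 and 2 v_j = 3 d_t m_{j+1} − d_t m_j for 1 ≤ j ≤ n−1. Then (τ Σ_{j=2}^{n} ‖d_t² m_j‖²)^{1/2} ≤ (1/τ) · √(18/7) · (τ Σ_{j=0}^{n−1} ‖v_j‖²)^{1/2}. -/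
open Finset

private lemma bdf2_auxA {E : Type*} [NormedAddCommGroup E] [NormedSpace ℝ E]
    (v d : ℕ → E) (M : ℕ) (h0 : d 0 = v 0)
    (hrec : ∀ k, 1 ≤ k → k ≤ M → d k = (2/3 : ℝ) • v k + (1/3 : ℝ) • d (k - 1)) :
    ∀ N, N ≤ M → ∑ k ∈ range (N + 1), ‖d k‖ ^ 2 + (1/2) * ‖d N‖ ^ 2
      ≤ (3/2) * ∑ k ∈ range (N + 1), ‖v k‖ ^ 2 := by
  intro N
  induction N with
  | zero =>
    intro _
    simp only [zero_add, Finset.sum_range_one, h0]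
    linarith [sq_nonneg ‖v 0‖]
  | succ N ih =>
    intro hNM
    have hIH := ih (Nat.le_of_succ_le hNM)
    have hrecN := hrec (N + 1) (Nat.succ_le_succ (Nat.zero_le N)) hNM
    have hnorm : ‖d (N + 1)‖ ≤ 2/3 * ‖v (N + 1)‖ + 1/3 * ‖d N‖ := by
      rw [hrecN]
      simp only [Nat.add_sub_cancel]
      refine (norm_add_le _ _).trans ?_
      simp only [norm_smul, Real.norm_eq_abs]
      rw [abs_of_pos (show (0:ℝ) < 2/3 by norm_num), abs_of_pos (show (0:ℝ) < 1/3 by norm_num)]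
    have hsq : ‖d (N + 1)‖ ^ 2 ≤ 2/3 * ‖v (N + 1)‖ ^ 2 + 1/3 * ‖d N‖ ^ 2 := by
      nlinarith [norm_nonneg (d (N + 1)), norm_nonneg (v (N + 1)), norm_nonneg (d N),
        sq_nonneg (‖v (N + 1)‖ - ‖d N‖)]
    rw [Finset.sum_range_succ, Finset.sum_range_succ (fun k => ‖v k‖ ^ 2)]
    linarith [sq_nonneg ‖v (N + 1)‖]


/-- Inverse estimate (Lemma 3.4): if `v 0 = d_t m 1` and `2 v j = 3 d_t m (j+1) - d_t m j`
for `1 ≤ j ≤ n-1`, then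
`(τ Σ_{j=2}^{n} ‖d_t² m j‖²)^{1/2} ≤ (1/τ) √(18/7) (τ Σ_{j<n} ‖v j‖²)^{1/2}`,
where `d_t m (j+1) = τ⁻¹ • (m (j+1) - m j)` and
`d_t² m j = (τ²)⁻¹ • (m j - 2 m (j-1) + m (j-2))`. -/
theorem bdf2_inverse_estimate {E : Type*} [NormedAddCommGroup E] [NormedSpace ℝ E]
    (τ : ℝ) (hτ : 0 < τ) (n : ℕ) (hn : 1 ≤ n) (m v : ℕ → E)
    (hv0 : v 0 = τ⁻¹ • (m 1 - m 0))
    (hvj : ∀ j : ℕ, 1 ≤ j → j ≤ n - 1 →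
      (2 : ℝ) • v j = (3 : ℝ) • (τ⁻¹ • (m (j + 1) - m j)) - τ⁻¹ • (m j - m (j - 1))) :
    Real.sqrt (τ * ∑ j ∈ Finset.Icc 2 n,
        ‖(τ ^ 2)⁻¹ • (m j - (2 : ℝ) • m (j - 1) + m (j - 2))‖ ^ 2)
      ≤ (1 / τ) * Real.sqrt (18/7)
          * Real.sqrt (τ * ∑ j ∈ Finset.range n, ‖v j‖ ^ 2) := by
  set d : ℕ → E := fun k => τ⁻¹ • (m (k + 1) - m k) with hd
  set B : ℝ := ∑ j ∈ Finset.range n, ‖v j‖ ^ 2 with hB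
  have hBnn : 0 ≤ B := Finset.sum_nonneg fun _ _ => sq_nonneg _
  by_cases hn1 : n = 1
  · subst hn1
    have : Finset.Icc 2 1 = (∅ : Finset ℕ) := by decide
    rw [this]
    simp
    positivity
  have hn2 : 2 ≤ n := by omega
  -- recursion for d
  have hrecd : ∀ k, 1 ≤ k → k ≤ n - 1 → d k = (2/3 : ℝ) • v k + (1/3 : ℝ) • d (k - 1) := by
    intro k hk1 hk2
    have h := hvj k hk1 hk2
    have e1 : k - 1 + 1 = k := by omega
    have hv : v k = (1/2 : ℝ) • ((3 : ℝ) • (τ⁻¹ • (m (k + 1) - m k)) - τ⁻¹ • (m k - m (k - 1))) := by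
      rw [← h, smul_smul]; norm_num
    simp only [hd, e1, hv]
    module
  -- key inequality: sum over Icc 2 n of squared second differences
  have hterm : ∀ j ∈ Finset.Icc 2 n,
      ‖(τ ^ 2)⁻¹ • (m j - (2 : ℝ) • m (j - 1) + m (j - 2))‖ ^ 2
        = (τ⁻¹) ^ 2 * ‖d (j - 1) - d (j - 2)‖ ^ 2 := by
    intro j hj
    obtain ⟨h2j, hjn⟩ := Finset.mem_Icc.mp hj
    have e1 : j - 1 + 1 = j := by omega
    have e2 : j - 2 + 1 = j - 1 := by omega
    have hrw : (τ ^ 2)⁻¹ • (m j - (2 : ℝ) • m (j - 1) + m (j - 2))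
        = τ⁻¹ • (d (j - 1) - d (j - 2)) := by
      simp only [hd, e1, e2]
      rw [show ((τ : ℝ) ^ 2)⁻¹ = τ⁻¹ * τ⁻¹ by rw [sq, mul_inv]]
      module
    rw [hrw, norm_smul, Real.norm_eq_abs, abs_of_pos (by positivity), mul_pow]
  rw [Finset.sum_congr rfl hterm, ← Finset.mul_sum]
  set C : ℝ := ∑ j ∈ Finset.Icc 2 n, ‖d (j - 1) - d (j - 2)‖ ^ 2 with hC
  have hCnn : 0 ≤ C := Finset.sum_nonneg fun _ _ => sq_nonneg _
  -- bound C
  have hCre : C = ∑ k ∈ Finset.Icc 1 (n - 1), ‖d k - d (k - 1)‖ ^ 2 := by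
    rw [hC, show Finset.Icc 2 n = (Finset.Icc 1 (n - 1)).map
      (addRightEmbedding 1) from by rw [Finset.map_add_right_Icc]; congr 1 <;> omega,
      Finset.sum_map]
    refine Finset.sum_congr rfl fun k hk => ?_
    obtain ⟨hk1, hk2⟩ := Finset.mem_Icc.mp hk
    simp only [addRightEmbedding_apply]
    congr 2 <;> omega
  have hstep : ∀ k ∈ Finset.Icc 1 (n - 1),
      ‖d k - d (k - 1)‖ ^ 2 ≤ 8/9 * (‖v k‖ ^ 2 + ‖d (k - 1)‖ ^ 2) := by
    intro k hk
    obtain ⟨hk1, hk2⟩ := Finset.mem_Icc.mp hk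
    have hdk := hrecd k hk1 hk2
    have hdiff : d k - d (k - 1) = (2/3 : ℝ) • v k - (2/3 : ℝ) • d (k - 1) := by
      rw [hdk]; module
    have hnorm : ‖d k - d (k - 1)‖ ≤ 2/3 * ‖v k‖ + 2/3 * ‖d (k - 1)‖ := by
      rw [hdiff]
      refine (norm_sub_le _ _).trans ?_
      simp only [norm_smul, Real.norm_eq_abs]
      rw [abs_of_pos (show (0:ℝ) < 2/3 by norm_num)]
    nlinarith [norm_nonneg (d k - d (k - 1)), norm_nonneg (v k), norm_nonneg (d (k - 1)),
      sq_nonneg (‖v k‖ - ‖d (k - 1)‖)]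
  have hAux := bdf2_auxA v d (n - 1) (by simp [hd, hv0]) hrecd (n - 2) (by omega)
  have hdsum : ∑ k ∈ Finset.Icc 1 (n - 1), ‖d (k - 1)‖ ^ 2
      = ∑ k ∈ Finset.range (n - 1), ‖d k‖ ^ 2 := by
    rw [show Finset.Icc 1 (n - 1) = (Finset.Icc 0 (n - 2)).map
      (addRightEmbedding 1) from by rw [Finset.map_add_right_Icc]; congr 1 <;> omega,
      Finset.sum_map, show Finset.range (n - 1) = Finset.Icc 0 (n - 2) from by
        ext x; simp [Finset.mem_Icc]; omega]
    refine Finset.sum_congr rfl fun k hk => ?_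
    simp only [addRightEmbedding_apply, Nat.add_sub_cancel]
  have hvsub : ∑ k ∈ Finset.Icc 1 (n - 1), ‖v k‖ ^ 2 ≤ B := by
    refine Finset.sum_le_sum_of_subset_of_nonneg ?_ (fun _ _ _ => sq_nonneg _)
    intro x hx
    obtain ⟨h1, h2⟩ := Finset.mem_Icc.mp hx
    exact Finset.mem_range.mpr (by omega)
  have hvsub2 : ∑ k ∈ Finset.range (n - 2 + 1), ‖v k‖ ^ 2 ≤ B := by
    refine Finset.sum_le_sum_of_subset_of_nonneg ?_ (fun _ _ _ => sq_nonneg _)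
    intro x hx
    exact Finset.mem_range.mpr (by have := Finset.mem_range.mp hx; omega)
  have hd2 : ∑ k ∈ Finset.range (n - 1), ‖d k‖ ^ 2 ≤ 3/2 * B := by
    have e3 : n - 2 + 1 = n - 1 := by omega
    rw [← e3]
    have h1 := hAux
    have h2 : (3/2 : ℝ) * ∑ k ∈ Finset.range (n - 2 + 1), ‖v k‖ ^ 2 ≤ 3/2 * B := by linarith
    nlinarith [sq_nonneg ‖d (n - 2)‖]
  have hCB : C ≤ 18/7 * B := by
    have h1 : C ≤ 8/9 * (∑ k ∈ Finset.Icc 1 (n - 1), ‖v k‖ ^ 2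
        + ∑ k ∈ Finset.Icc 1 (n - 1), ‖d (k - 1)‖ ^ 2) := by
      rw [hCre, ← Finset.sum_add_distrib, Finset.mul_sum]
      exact Finset.sum_le_sum hstep
    rw [hdsum] at h1
    linarith
  -- finish with sqrt algebra
  have key : τ * ((τ⁻¹) ^ 2 * C) ≤ (1/τ) ^ 2 * ((18/7) * (τ * B)) := by
    have h : (1/τ) ^ 2 * ((18/7) * (τ * B)) - τ * ((τ⁻¹) ^ 2 * C)
        = τ * (τ⁻¹) ^ 2 * (18/7 * B - C) := by field_simp
    nlinarith [mul_pos hτ (pow_pos (inv_pos.mpr hτ) 2), sub_nonneg.mpr hCB]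
  calc Real.sqrt (τ * ((τ⁻¹) ^ 2 * C))
      ≤ Real.sqrt ((1/τ) ^ 2 * ((18/7) * (τ * B))) := Real.sqrt_le_sqrt key
    _ = (1/τ) * Real.sqrt (18/7) * Real.sqrt (τ * B) := by
        rw [Real.sqrt_mul (sq_nonneg _), Real.sqrt_sq (by positivity),
          Real.sqrt_mul (by norm_num : (0:ℝ) ≤ 18/7), ← mul_assoc]
end

section
/- Let V and H be real inner product spaces, G : V → H a linear map, α, λ, τ > 0, and n ≥ 1. Let (m_j)_{0≤j≤n}, (v_j)_{0≤j≤n−1}, (f_j)_{1≤j≤n} in V satisfy the tested first step m_1 = m_0 + τ v_0 with α‖v_0‖² + λ²⟨G m_1, G v_0⟩ = ⟨f_1, v_0⟩, and the tested BDF2 steps m_{j+1} = (4/3)m_j − (1/3)m_{j-1} + (2/3)τ v_j with α‖v_j‖² + λ²⟨G m_{j+1}, G v_j⟩ = ⟨f_{j+1}, v_j⟩ for all 1 ≤ j ≤ n−1. Then, with η_0 := ‖G m_1‖² − ‖G m_0‖² and η_n := ‖G m_{n−1}‖² − ‖G m_n‖², the discrete energy identity holds: α τ Σ_{j=0}^{n−1}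 ‖v_j‖² + (λ²/2)‖G m_n‖² + (λ²/2) τ² ‖G d_t m_n‖² + (λ²/4) τ⁴ Σ_{j=1}^{n−1} ‖G d_t² m_{j+1}‖² = (λ²/2)‖G m_0‖² + τ Σ_{j=0}^{n−1} ⟨f_{j+1}, v_j⟩ + (λ²/4)(η_0 + η_n). -/
open scoped RealInnerProductSpace

private lemma bdf2_key0 {H : Type*} [NormedAddCommGroup H] [InnerProductSpace ℝ H] (x y : H) :
    ⟪x, x - y⟫ = (1/2)*‖x‖^2 - (1/2)*‖y‖^2 + (1/2)*‖x - y‖^2 := by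
  simp only [← real_inner_self_eq_norm_sq, inner_sub_left, inner_sub_right]
  rw [real_inner_comm y x]; ring

private lemma bdf2_key1 {H : Type*} [NormedAddCommGroup H] [InnerProductSpace ℝ H] (x y z : H) :
    ⟪x, (3/2:ℝ) • x - (2:ℝ) • y + (1/2:ℝ) • z⟫
      = (1/2)*‖x‖^2 - (1/2)*‖y‖^2 + (1/2)*‖x - y‖^2 - (1/2)*‖y - z‖^2
        + (1/4)*‖x - (2:ℝ) • y + z‖^2 - (1/4)*(2*‖y‖^2 - ‖x‖^2 - ‖z‖^2) := by
  simp only [← real_inner_self_eq_norm_sq, inner_sub_left, inner_sub_right,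
    inner_add_left, inner_add_right, real_inner_smul_left, real_inner_smul_right]
  rw [real_inner_comm y x, real_inner_comm z x, real_inner_comm z y]; ring

private lemma bdf2_clean {V H : Type*}
    [NormedAddCommGroup V] [InnerProductSpace ℝ V]
    [NormedAddCommGroup H] [InnerProductSpace ℝ H]
    (G : V →ₗ[ℝ] H) (α lam τ : ℝ)
    (n : ℕ) (hn : 1 ≤ n) (m v f : ℕ → V)
    (h1 : m 1 = m 0 + τ • v 0)
    (h1test : α * ‖v 0‖ ^ 2 + lam ^ 2 * ⟪G (m 1), G (v 0)⟫ = ⟪f 1, v 0⟫)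
    (hstep : ∀ j : ℕ, 1 ≤ j → j ≤ n - 1 →
      m (j + 1) = (4/3 : ℝ) • m j - (1/3 : ℝ) • m (j - 1) + ((2/3) * τ) • v j)
    (htest : ∀ j : ℕ, 1 ≤ j → j ≤ n - 1 →
      α * ‖v j‖ ^ 2 + lam ^ 2 * ⟪G (m (j + 1)), G (v j)⟫ = ⟪f (j + 1), v j⟫) :
    α * τ * ∑ j ∈ Finset.range n, ‖v j‖ ^ 2
      + (lam ^ 2 / 2) * ‖G (m n)‖ ^ 2
      + (lam ^ 2 / 2) * ‖G (m n) - G (m (n - 1))‖ ^ 2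
      + (lam ^ 2 / 4) * ∑ j ∈ Finset.Icc 1 (n - 1),
          ‖G (m (j + 1)) - (2 : ℝ) • G (m j) + G (m (j - 1))‖ ^ 2
    = (lam ^ 2 / 2) * ‖G (m 0)‖ ^ 2
      + τ * ∑ j ∈ Finset.range n, ⟪f (j + 1), v j⟫
      + (lam ^ 2 / 4) * ((‖G (m 1)‖ ^ 2 - ‖G (m 0)‖ ^ 2)
          + (‖G (m (n - 1))‖ ^ 2 - ‖G (m n)‖ ^ 2)) := by
  have main : ∀ k, 1 ≤ k → k ≤ n →
      α * τ * ∑ j ∈ Finset.range k, ‖v j‖ ^ 2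
      + (lam ^ 2 / 2) * ‖G (m k)‖ ^ 2
      + (lam ^ 2 / 2) * ‖G (m k) - G (m (k - 1))‖ ^ 2
      + (lam ^ 2 / 4) * ∑ j ∈ Finset.Icc 1 (k - 1),
          ‖G (m (j + 1)) - (2 : ℝ) • G (m j) + G (m (j - 1))‖ ^ 2
    = (lam ^ 2 / 2) * ‖G (m 0)‖ ^ 2
      + τ * ∑ j ∈ Finset.range k, ⟪f (j + 1), v j⟫
      + (lam ^ 2 / 4) * ((‖G (m 1)‖ ^ 2 - ‖G (m 0)‖ ^ 2)
          + (‖G (m (k - 1))‖ ^ 2 - ‖G (m k)‖ ^ 2)) := by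
    intro k hk
    induction k, hk using Nat.le_induction with
    | base =>
      intro _
      have hv0 : τ • v 0 = m 1 - m 0 := by rw [h1]; abel
      have hinner : τ * ⟪G (m 1), G (v 0)⟫
          = (1/2)*‖G (m 1)‖^2 - (1/2)*‖G (m 0)‖^2 + (1/2)*‖G (m 1) - G (m 0)‖^2 := by
        rw [← real_inner_smul_right, ← map_smul, hv0, map_sub, bdf2_key0]
      simp only [Finset.sum_range_one, show (1:ℕ) - 1 = 0 from rfl,
        Finset.Icc_eq_empty (by omega : ¬ (1:ℕ) ≤ 0), Finset.sum_empty]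
      linear_combination τ * h1test - lam^2 * hinner
    | succ k hk ih =>
      intro hkn
      obtain ⟨p, rfl⟩ : ∃ p, k = p + 1 := ⟨k - 1, by omega⟩
      have hs := hstep (p+1) (by omega) (by omega)
      have ht := htest (p+1) (by omega) (by omega)
      have hv : τ • v (p+1) = (3/2:ℝ) • m (p+1+1) - (2:ℝ) • m (p+1) + (1/2:ℝ) • m p := by
        rw [hs]; show _ = _ • ((4/3 : ℝ) • m (p+1) - (1/3 : ℝ) • m p + ((2/3) * τ) • v (p+1)) - _ + _
        module
      have hinner : τ * ⟪G (m (p+1+1)), G (v (p+1))⟫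
          = (1/2)*‖G (m (p+1+1))‖^2 - (1/2)*‖G (m (p+1))‖^2
            + (1/2)*‖G (m (p+1+1)) - G (m (p+1))‖^2 - (1/2)*‖G (m (p+1)) - G (m p)‖^2
            + (1/4)*‖G (m (p+1+1)) - (2:ℝ) • G (m (p+1)) + G (m p)‖^2
            - (1/4)*(2*‖G (m (p+1))‖^2 - ‖G (m (p+1+1))‖^2 - ‖G (m p)‖^2) := by
        rw [← real_inner_smul_right, ← map_smul, hv]
        simp only [map_sub, map_add, map_smul]
        exact bdf2_key1 _ _ _
      have ih' := ih (by omega)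
      simp only [Nat.add_sub_cancel] at ih' ⊢
      rw [Finset.sum_range_succ, Finset.sum_range_succ (f := fun j => ⟪f (j+1), v j⟫),
        Finset.sum_Icc_succ_top (by omega : 1 ≤ p+1)]
      simp only [Nat.add_sub_cancel]
      linear_combination ih' + τ * ht - lam^2 * hinner
  exact main n hn (le_refl n)

/-- Discrete energy identity (Lemma 3.5, equation (3.9)) for the BDF2 tangent-plane
integrator, in abstract form: `G : V → H` linear abstracts the weak gradient,
`d_t m n = τ⁻¹ • (m n - m (n-1))`, `d_t² m (j+1) = (τ²)⁻¹ • (m (j+1) - 2 m j + m (j-1))`,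
`η₀ = ‖G m 1‖² - ‖G m 0‖²`, `η_n = ‖G m (n-1)‖² - ‖G m n‖²`. -/
theorem bdf2_discrete_energy_identity {V H : Type*}
    [NormedAddCommGroup V] [InnerProductSpace ℝ V]
    [NormedAddCommGroup H] [InnerProductSpace ℝ H]
    (G : V →ₗ[ℝ] H) (α lam τ : ℝ) (hα : 0 < α) (hlam : 0 < lam) (hτ : 0 < τ)
    (n : ℕ) (hn : 1 ≤ n) (m v f : ℕ → V)
    (h1 : m 1 = m 0 + τ • v 0)
    (h1test : α * ‖v 0‖ ^ 2 + lam ^ 2 * ⟪G (m 1), G (v 0)⟫ = ⟪f 1, v 0⟫)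
    (hstep : ∀ j : ℕ, 1 ≤ j → j ≤ n - 1 →
      m (j + 1) = (4/3 : ℝ) • m j - (1/3 : ℝ) • m (j - 1) + ((2/3) * τ) • v j)
    (htest : ∀ j : ℕ, 1 ≤ j → j ≤ n - 1 →
      α * ‖v j‖ ^ 2 + lam ^ 2 * ⟪G (m (j + 1)), G (v j)⟫ = ⟪f (j + 1), v j⟫) :
    α * τ * ∑ j ∈ Finset.range n, ‖v j‖ ^ 2
      + (lam ^ 2 / 2) * ‖G (m n)‖ ^ 2
      + (lam ^ 2 / 2) * τ ^ 2 * ‖G (τ⁻¹ • (m n - m (n - 1)))‖ ^ 2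
      + (lam ^ 2 / 4) * τ ^ 4 * ∑ j ∈ Finset.Icc 1 (n - 1),
          ‖G ((τ ^ 2)⁻¹ • (m (j + 1) - (2 : ℝ) • m j + m (j - 1)))‖ ^ 2
    = (lam ^ 2 / 2) * ‖G (m 0)‖ ^ 2
      + τ * ∑ j ∈ Finset.range n, ⟪f (j + 1), v j⟫
      + (lam ^ 2 / 4) * ((‖G (m 1)‖ ^ 2 - ‖G (m 0)‖ ^ 2)
          + (‖G (m (n - 1))‖ ^ 2 - ‖G (m n)‖ ^ 2)) := by
  have hc := bdf2_clean G α lam τ n hn m v f h1 h1test hstep htest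
  have hτ0 : τ ≠ 0 := ne_of_gt hτ
  have e1 : ‖G (τ⁻¹ • (m n - m (n - 1)))‖ ^ 2
      = (τ ^ 2)⁻¹ * ‖G (m n) - G (m (n - 1))‖ ^ 2 := by
    rw [map_smul, norm_smul, mul_pow, Real.norm_eq_abs, sq_abs, inv_pow, map_sub]
  have e2 : ∀ j : ℕ, ‖G ((τ ^ 2)⁻¹ • (m (j + 1) - (2 : ℝ) • m j + m (j - 1)))‖ ^ 2
      = (τ ^ 4)⁻¹ * ‖G (m (j + 1)) - (2 : ℝ) • G (m j) + G (m (j - 1))‖ ^ 2 := by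
    intro j
    rw [map_smul, norm_smul, mul_pow, Real.norm_eq_abs, sq_abs, inv_pow,
      show ((τ ^ 2) ^ 2) = τ ^ 4 by ring, map_add, map_sub, map_smul]
  simp only [e1, e2]
  rw [← Finset.mul_sum]
  have h2 : τ ^ 2 * (τ ^ 2)⁻¹ = 1 := mul_inv_cancel₀ (by positivity)
  have h4 : τ ^ 4 * (τ ^ 4)⁻¹ = 1 := mul_inv_cancel₀ (by positivity)
  linear_combination hc
    + ((lam ^ 2 / 2) * ‖G (m n) - G (m (n - 1))‖ ^ 2) * h2
    + ((lam ^ 2 / 4) * ∑ j ∈ Finset.Icc 1 (n - 1),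
        ‖G (m (j + 1)) - (2 : ℝ) • G (m j) + G (m (j - 1))‖ ^ 2) * h4
end

section
/- Let V and H be real inner product spaces, G : V → H a linear map, and α, λ, τ > 0. Suppose m_0, m_1, v_0, f_1 ∈ V satisfy m_1 = m_0 + τ v_0 and α‖v_0‖² + λ²⟨G m_1, G v_0⟩ = ⟨f_1, v_0⟩. Then λ²‖G m_1‖² + τ α ‖v_0‖² + τ² λ² ‖G v_0‖² ≤ λ²‖G m_0‖² + (τ/α)‖f_1‖². -/
open scoped RealInnerProductSpace

/-- Discrete energy estimate for the first (projection-free tangent-plane) step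
of the BDF2 integrator (Lemma 3.5, estimate (3.10)):
`λ²‖G m₁‖² + τ α ‖v₀‖² + τ² λ² ‖G v₀‖² ≤ λ²‖G m₀‖² + (τ/α)‖f₁‖²`. -/
theorem bdf2_first_step_energy_estimate {V H : Type*}
    [NormedAddCommGroup V] [InnerProductSpace ℝ V]
    [NormedAddCommGroup H] [InnerProductSpace ℝ H]
    (G : V →ₗ[ℝ] H) (α lam τ : ℝ) (hα : 0 < α) (hlam : 0 < lam) (hτ : 0 < τ)
    (m0 m1 v0 f1 : V)
    (hstep : m1 = m0 + τ • v0)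
    (htest : α * ‖v0‖ ^ 2 + lam ^ 2 * ⟪G m1, G v0⟫ = ⟪f1, v0⟫) :
    lam ^ 2 * ‖G m1‖ ^ 2 + τ * α * ‖v0‖ ^ 2 + τ ^ 2 * lam ^ 2 * ‖G v0‖ ^ 2
      ≤ lam ^ 2 * ‖G m0‖ ^ 2 + (τ / α) * ‖f1‖ ^ 2 := by
  have hG : G m1 = G m0 + τ • G v0 := by rw [hstep]; simp
  have hnorm : ‖G m1‖ ^ 2 = ‖G m0‖ ^ 2 + 2 * (τ * ⟪G m0, G v0⟫) + τ ^ 2 * ‖G v0‖ ^ 2 := by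
    rw [hG, @norm_add_sq_real, real_inner_smul_right, norm_smul]
    rw [Real.norm_eq_abs, abs_of_pos hτ, mul_pow]
  have hinner : ⟪G m1, G v0⟫ = ⟪G m0, G v0⟫ + τ * ‖G v0‖ ^ 2 := by
    rw [hG, inner_add_left, real_inner_smul_left, real_inner_self_eq_norm_sq]
  have hcs : ⟪f1, v0⟫ ≤ ‖f1‖ * ‖v0‖ := real_inner_le_norm f1 v0
  have hyoung : 2 * ⟪f1, v0⟫ ≤ (1 / α) * ‖f1‖ ^ 2 + α * ‖v0‖ ^ 2 := by
    have h2 : (0:ℝ) ≤ (‖f1‖ - α * ‖v0‖) ^ 2 / α := by positivity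
    have : (‖f1‖ - α * ‖v0‖) ^ 2 / α = (1 / α) * ‖f1‖ ^ 2 + α * ‖v0‖ ^ 2
        - 2 * (‖f1‖ * ‖v0‖) := by field_simp; ring
    linarith [this ▸ h2]
  have hτy := mul_le_mul_of_nonneg_left hyoung hτ.le
  have : (τ / α) * ‖f1‖ ^ 2 = τ * ((1 / α) * ‖f1‖ ^ 2) := by ring
  have key : lam ^ 2 * ‖G m1‖ ^ 2 + τ * α * ‖v0‖ ^ 2 + τ ^ 2 * lam ^ 2 * ‖G v0‖ ^ 2
      = lam ^ 2 * ‖G m0‖ ^ 2 + τ * (2 * ⟪f1, v0⟫) - τ * α * ‖v0‖ ^ 2 := by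
    linear_combination lam ^ 2 * hnorm - 2 * τ * lam ^ 2 * hinner + 2 * τ * htest
  linarith [key, hτy, this]
end

section
/- Let V and H be real inner product spaces, G : V → H a linear map, α, λ, τ > 0, and n ≥ 2. Let (m_j)_{0≤j≤n}, (v_j)_{1≤j≤n−1}, (f_j)_{2≤j≤n} in V satisfy, for all 1 ≤ j ≤ n−1, the BDF2 step m_{j+1} = (4/3)m_j − (1/3)m_{j-1} + (2/3)τ v_j together with the tested equation α‖v_j‖² + λ²⟨G m_{j+1}, G v_j⟩ = ⟨f_{j+1}, v_j⟩. Then, with γ^± := (3 ± 2√2)/4, the discrete energy inequality holds: λ² γ⁻ (‖G m_n‖² + ‖G m_{n−1}‖²) + (α τ/2) Σ_{j=1}^{n−1} ‖v_j‖² + (λ²/4) τ⁴ Σ_{j=1}^{n−1} ‖G d_t² m_{j+1}‖² ≤ λ² γ⁺ (‖G m_0‖² + ‖G m_1‖²) + (τ/(2α)) Σ_{j=1}^{n−1} ‖f_{j+1}‖². -/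
open scoped RealInnerProductSpace

private lemma bdf2_tele (E : ℕ → ℝ) (k : ℕ) :
    ∑ j ∈ Finset.Icc 1 k, (E (j + 1) - E j) = E (k + 1) - E 1 := by
  induction k with
  | zero => simp
  | succ k ih => rw [Finset.sum_Icc_succ_top (by omega), ih]; ring

private lemma bdf2_gidentity {H : Type*} [NormedAddCommGroup H] [InnerProductSpace ℝ H]
    (a b c : H) :
    (5 * ‖a‖ ^ 2 - 4 * ⟪a, b⟫ + ‖b‖ ^ 2) / 4 - (5 * ‖b‖ ^ 2 - 4 * ⟪b, c⟫ + ‖c‖ ^ 2) / 4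
      + ‖a - (2 : ℝ) • b + c‖ ^ 2 / 4
    = ⟪a, (3/2 : ℝ) • a - (2 : ℝ) • b + (1/2 : ℝ) • c⟫ := by
  have h1 : ‖a - (2 : ℝ) • b + c‖ ^ 2 = ⟪a - (2 : ℝ) • b + c, a - (2 : ℝ) • b + c⟫ :=
    (real_inner_self_eq_norm_sq _).symm
  have h2 : ‖a‖ ^ 2 = ⟪a, a⟫ := (real_inner_self_eq_norm_sq _).symm
  have h3 : ‖b‖ ^ 2 = ⟪b, b⟫ := (real_inner_self_eq_norm_sq _).symm
  have h4 : ‖c‖ ^ 2 = ⟪c, c⟫ := (real_inner_self_eq_norm_sq _).symm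
  simp only [h1, h2, h3, h4, inner_add_left, inner_add_right, inner_sub_left, inner_sub_right,
    inner_smul_left, inner_smul_right, starRingEnd_apply, star_trivial]
  rw [real_inner_comm b a, real_inner_comm c a, real_inner_comm c b]
  ring

private lemma bdf2_lower {H : Type*} [NormedAddCommGroup H] [InnerProductSpace ℝ H]
    (u w : H) :
    (3 - 2 * Real.sqrt 2) / 4 * (‖u‖ ^ 2 + ‖w‖ ^ 2)
      ≤ (5 * ‖u‖ ^ 2 - 4 * ⟪u, w⟫ + ‖w‖ ^ 2) / 4 := by
  have hcs : ⟪u, w⟫ ≤ ‖u‖ * ‖w‖ := real_inner_le_norm u w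
  have hs : Real.sqrt 2 ^ 2 = 2 := Real.sq_sqrt (by norm_num)
  have hs0 : (0:ℝ) ≤ Real.sqrt 2 := Real.sqrt_nonneg 2
  nlinarith [sq_nonneg ((2 + 2 * Real.sqrt 2) * ‖u‖ - 2 * ‖w‖), sq_nonneg (‖u‖ - ‖w‖),
    mul_nonneg hs0 (sq_nonneg (‖u‖ - ‖w‖))]

private lemma bdf2_upper {H : Type*} [NormedAddCommGroup H] [InnerProductSpace ℝ H]
    (u w : H) :
    (5 * ‖u‖ ^ 2 - 4 * ⟪u, w⟫ + ‖w‖ ^ 2) / 4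
      ≤ (3 + 2 * Real.sqrt 2) / 4 * (‖u‖ ^ 2 + ‖w‖ ^ 2) := by
  have hcs : -(‖u‖ * ‖w‖) ≤ ⟪u, w⟫ := by
    have := abs_real_inner_le_norm u w
    have := neg_abs_le (⟪u, w⟫ : ℝ)
    linarith
  have hs : Real.sqrt 2 ^ 2 = 2 := Real.sq_sqrt (by norm_num)
  have hs0 : (0:ℝ) ≤ Real.sqrt 2 := Real.sqrt_nonneg 2
  have hs1 : (0:ℝ) < 2 * Real.sqrt 2 - 2 := by nlinarith
  nlinarith [sq_nonneg ((2 * Real.sqrt 2 - 2) * ‖u‖ - 2 * ‖w‖),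
    mul_nonneg hs1.le (by linarith : (0:ℝ) ≤ ⟪u, w⟫ + ‖u‖ * ‖w‖)]

/-- Discrete energy inequality (Lemma 3.5, estimate (3.11)) for the BDF2 steps,
with `γ± = (3 ± 2√2)/4` the eigenvalues of the G-stability matrix and
`d_t² m (j+1) = (τ²)⁻¹ • (m (j+1) - 2 m j + m (j-1))`. -/
theorem bdf2_discrete_energy_inequality {V H : Type*}
    [NormedAddCommGroup V] [InnerProductSpace ℝ V]
    [NormedAddCommGroup H] [InnerProductSpace ℝ H]
    (G : V →ₗ[ℝ] H) (α lam τ : ℝ) (hα : 0 < α) (hlam : 0 < lam) (hτ : 0 < τ)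
    (n : ℕ) (hn : 2 ≤ n) (m v f : ℕ → V)
    (hstep : ∀ j : ℕ, 1 ≤ j → j ≤ n - 1 →
      m (j + 1) = (4/3 : ℝ) • m j - (1/3 : ℝ) • m (j - 1) + ((2/3) * τ) • v j)
    (htest : ∀ j : ℕ, 1 ≤ j → j ≤ n - 1 →
      α * ‖v j‖ ^ 2 + lam ^ 2 * ⟪G (m (j + 1)), G (v j)⟫ = ⟪f (j + 1), v j⟫) :
    lam ^ 2 * ((3 - 2 * Real.sqrt 2) / 4) * (‖G (m n)‖ ^ 2 + ‖G (m (n - 1))‖ ^ 2)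
      + (α * τ / 2) * ∑ j ∈ Finset.Icc 1 (n - 1), ‖v j‖ ^ 2
      + (lam ^ 2 / 4) * τ ^ 4 * ∑ j ∈ Finset.Icc 1 (n - 1),
          ‖G ((τ ^ 2)⁻¹ • (m (j + 1) - (2 : ℝ) • m j + m (j - 1)))‖ ^ 2
    ≤ lam ^ 2 * ((3 + 2 * Real.sqrt 2) / 4) * (‖G (m 0)‖ ^ 2 + ‖G (m 1)‖ ^ 2)
      + (τ / (2 * α)) * ∑ j ∈ Finset.Icc 1 (n - 1), ‖f (j + 1)‖ ^ 2 := by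
  set E : ℕ → ℝ := fun j =>
    (5 * ‖G (m j)‖ ^ 2 - 4 * ⟪G (m j), G (m (j - 1))⟫ + ‖G (m (j - 1))‖ ^ 2) / 4 with hE
  -- per-step estimate
  have key : ∀ j ∈ Finset.Icc 1 (n - 1),
      (α * τ / 2) * ‖v j‖ ^ 2 + lam ^ 2 * (E (j + 1) - E j)
        + (lam ^ 2 / 4) * τ ^ 4 *
          ‖G ((τ ^ 2)⁻¹ • (m (j + 1) - (2 : ℝ) • m j + m (j - 1)))‖ ^ 2
      ≤ (τ / (2 * α)) * ‖f (j + 1)‖ ^ 2 := by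
    intro j hj
    simp only [Finset.mem_Icc] at hj
    obtain ⟨hj1, hj2⟩ := hj
    have hτv : τ • v j = (3/2 : ℝ) • m (j + 1) - (2 : ℝ) • m j + (1/2 : ℝ) • m (j - 1) := by
      rw [hstep j hj1 hj2]; module
    set a := G (m (j + 1)) with ha
    set b := G (m j) with hb
    set c := G (m (j - 1)) with hc
    have hGτv : τ • G (v j) = (3/2 : ℝ) • a - (2 : ℝ) • b + (1/2 : ℝ) • c := by
      rw [← map_smul, hτv]; simp [ha, hb, hc]
    -- inner product with a
    have hkey : τ * ⟪a, G (v j)⟫ = ⟪a, (3/2 : ℝ) • a - (2 : ℝ) • b + (1/2 : ℝ) • c⟫ := by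
      rw [← hGτv, real_inner_smul_right]
    have hGδ : G (m (j + 1) - (2 : ℝ) • m j + m (j - 1)) = a - (2 : ℝ) • b + c := by
      simp [ha, hb, hc]
    have hδnorm : ‖G ((τ ^ 2)⁻¹ • (m (j + 1) - (2 : ℝ) • m j + m (j - 1)))‖ ^ 2
        = (τ ^ 2)⁻¹ ^ 2 * ‖a - (2 : ℝ) • b + c‖ ^ 2 := by
      rw [map_smul, norm_smul, hGδ, mul_pow]
      congr 1
      rw [Real.norm_eq_abs, abs_of_pos (by positivity)]
    have hEE : E (j + 1) - E j + ‖a - (2 : ℝ) • b + c‖ ^ 2 / 4 = τ * ⟪a, G (v j)⟫ := by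
      rw [hkey, hE]
      simp only [Nat.add_sub_cancel]
      exact bdf2_gidentity a b c
    have hyoung : 2 * α * ⟪f (j + 1), v j⟫ ≤ ‖f (j + 1)‖ ^ 2 + α ^ 2 * ‖v j‖ ^ 2 := by
      have h1 : ⟪f (j + 1), v j⟫ ≤ ‖f (j + 1)‖ * ‖v j‖ := real_inner_le_norm _ _
      nlinarith [mul_le_mul_of_nonneg_left h1 (by linarith : (0:ℝ) ≤ 2 * α),
        sq_nonneg (‖f (j + 1)‖ - α * ‖v j‖)]
    have ht := htest j hj1 hj2
    rw [← ha] at ht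
    have hτ4 : (lam ^ 2 / 4) * τ ^ 4 *
        ‖G ((τ ^ 2)⁻¹ • (m (j + 1) - (2 : ℝ) • m j + m (j - 1)))‖ ^ 2
        = (lam ^ 2 / 4) * ‖a - (2 : ℝ) • b + c‖ ^ 2 := by
      rw [hδnorm]
      field_simp
    rw [hτ4]
    have h5 : α * τ * ‖v j‖ ^ 2 + lam ^ 2 * (E (j + 1) - E j)
        + lam ^ 2 / 4 * ‖a - (2 : ℝ) • b + c‖ ^ 2 = τ * ⟪f (j + 1), v j⟫ := by
      linear_combination τ * ht + lam ^ 2 * hEE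
    have h2α : (0:ℝ) < 2 * α := by linarith
    have h7 : τ / (2 * α) * ‖f (j + 1)‖ ^ 2 + τ * α / 2 * ‖v j‖ ^ 2
        - τ * ⟪f (j + 1), v j⟫
        = (τ * (‖f (j + 1)‖ ^ 2 + α ^ 2 * ‖v j‖ ^ 2 - 2 * α * ⟪f (j + 1), v j⟫)) / (2 * α) := by
      field_simp
    have h8 : (0:ℝ) ≤ (τ * (‖f (j + 1)‖ ^ 2 + α ^ 2 * ‖v j‖ ^ 2
        - 2 * α * ⟪f (j + 1), v j⟫)) / (2 * α) :=
      div_nonneg (mul_nonneg hτ.le (by linarith)) h2α.le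
    linarith
  have hsum := Finset.sum_le_sum key
  rw [Finset.sum_add_distrib, Finset.sum_add_distrib, ← Finset.mul_sum, ← Finset.mul_sum,
    ← Finset.mul_sum, ← Finset.mul_sum, bdf2_tele E (n - 1)] at hsum
  have hn1 : n - 1 + 1 = n := by omega
  rw [hn1] at hsum
  have hlow := bdf2_lower (G (m n)) (G (m (n - 1)))
  have hup := bdf2_upper (G (m 1)) (G (m 0))
  have hl2 : (0:ℝ) ≤ lam ^ 2 := sq_nonneg lam
  have hlow' := mul_le_mul_of_nonneg_left hlow hl2
  have hup' := mul_le_mul_of_nonneg_left hup hl2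
  have hE1 : E 1 = (5 * ‖G (m 1)‖ ^ 2 - 4 * ⟪G (m 1), G (m 0)⟫ + ‖G (m 0)‖ ^ 2) / 4 := by
    simp [hE]
  have hEn : E n
      = (5 * ‖G (m n)‖ ^ 2 - 4 * ⟪G (m n), G (m (n - 1))⟫ + ‖G (m (n - 1))‖ ^ 2) / 4 := rfl
  rw [hE1, hEn] at hsum
  nlinarith [hsum, hlow', hup']
end

section
/- Let V and H be real inner product spaces, G : V → H a linear map, α, λ, τ > 0, and N ≥ 1. Let (m_j)_{0≤j≤N}, (v_j)_{0≤j≤N−1}, (f_j)_{1≤j≤N} in V satisfy the tested first step m_1 = m_0 + τ v_0 with α‖v_0‖² + λ²⟨G m_1, G v_0⟩ = ⟨f_1, v_0⟩, and the tested BDF2 steps m_{j+1} = (4/3)m_j − (1/3)m_{j-1} + (2/3)τ v_j with α‖v_j‖² + λ²⟨G m_{j+1}, G v_j⟩ = ⟨f_{j+1}, v_j⟩ for 1 ≤ j ≤ N−1. Assume the data bounds ‖G m_0‖² ≤ C_0² and τ Σ_{j=1}^{N} ‖f_j‖² ≤ C_f². Then there exists a constant C > 0, depending only on α, λ, C_0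 and C_f (in particular independent of τ, N and the sequences), such that for every 0 ≤ n ≤ N: ‖G m_n‖² + τ Σ_{j=0}^{n−1} ‖v_j‖² + τ⁴ Σ_{j=1}^{n−1} ‖G d_t² m_{j+1}‖² ≤ C. -/
open scoped RealInnerProductSpace

lemma aux_inner1 {H : Type*} [NormedAddCommGroup H] [InnerProductSpace ℝ H] (a b : H) :
    2 * ⟪a, a - b⟫ = ‖a‖^2 - ‖b‖^2 + ‖a - b‖^2 := by
  simp only [← real_inner_self_eq_norm_sq, inner_sub_left, inner_sub_right]
  linear_combination real_inner_comm a b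

lemma aux_inner2 {H : Type*} [NormedAddCommGroup H] [InnerProductSpace ℝ H] (a b c : H) :
    2 * ⟪a, (3:ℝ)•a - (4:ℝ)•b + c⟫ =
      (‖a‖^2 + ‖(2:ℝ)•a - b‖^2) - (‖b‖^2 + ‖(2:ℝ)•b - c‖^2)
        + ‖a - (2:ℝ)•b + c‖^2 := by
  simp only [← real_inner_self_eq_norm_sq, inner_add_left, inner_add_right,
    inner_sub_left, inner_sub_right, real_inner_smul_left, real_inner_smul_right]
  linear_combination (4:ℝ) * real_inner_comm a b - real_inner_comm a c

set_option maxHeartbeats 2000000 in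
/-- Boundedness of discrete gradients (Proposition 3.6): there is a constant `C > 0`
depending only on `α, λ, C₀, C_f` (in particular independent of the spaces, the
linear map `G`, of `τ`, `N` and the sequences) such that
`‖G m n‖² + τ Σ_{j<n} ‖v j‖² + τ⁴ Σ_{j=1}^{n-1} ‖G d_t² m (j+1)‖² ≤ C` for all `n ≤ N`. -/
theorem bdf2_uniform_boundedness (α lam C0 Cf : ℝ) (hα : 0 < α) (hlam : 0 < lam) :
    ∃ C : ℝ, 0 < C ∧
      ∀ (V H : Type) [NormedAddCommGroup V] [InnerProductSpace ℝ V]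
        [NormedAddCommGroup H] [InnerProductSpace ℝ H],
        ∀ (G : V →ₗ[ℝ] H) (τ : ℝ) (N : ℕ) (m v f : ℕ → V),
        0 < τ → 1 ≤ N →
        m 1 = m 0 + τ • v 0 →
        α * ‖v 0‖ ^ 2 + lam ^ 2 * ⟪G (m 1), G (v 0)⟫ = ⟪f 1, v 0⟫ →
        (∀ j : ℕ, 1 ≤ j → j ≤ N - 1 →
          m (j + 1) = (4/3 : ℝ) • m j - (1/3 : ℝ) • m (j - 1) + ((2/3) * τ) • v j) →
        (∀ j : ℕ, 1 ≤ j → j ≤ N - 1 →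
          α * ‖v j‖ ^ 2 + lam ^ 2 * ⟪G (m (j + 1)), G (v j)⟫ = ⟪f (j + 1), v j⟫) →
        ‖G (m 0)‖ ^ 2 ≤ C0 ^ 2 →
        τ * ∑ j ∈ Finset.Icc 1 N, ‖f j‖ ^ 2 ≤ Cf ^ 2 →
        ∀ n : ℕ, n ≤ N →
          ‖G (m n)‖ ^ 2 + τ * ∑ j ∈ Finset.range n, ‖v j‖ ^ 2
            + τ ^ 4 * ∑ j ∈ Finset.Icc 1 (n - 1),
                ‖G ((τ ^ 2)⁻¹ • (m (j + 1) - (2 : ℝ) • m j + m (j - 1)))‖ ^ 2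
          ≤ C := by
  have hc : (0:ℝ) < min (lam^2/4) (α/2) := lt_min (by positivity) (by positivity)
  set c := min (lam^2/4) (α/2) with hcdef
  have hc1 : c ≤ lam^2/4 := min_le_left _ _
  have hc2 : c ≤ α/2 := min_le_right _ _
  refine ⟨max (C0^2) (((3/4)*lam^2*C0^2 + 3/4*α⁻¹*Cf^2)/c) + 1, ?_, ?_⟩
  · have h0 : (0:ℝ) ≤ C0^2 := sq_nonneg _
    have := le_max_left (C0^2) (((3/4)*lam^2*C0^2 + 3/4*α⁻¹*Cf^2)/c)
    linarith
  intro V H _ _ _ _ G τ N m v f hτ hN hstep1 htest1 hstep htest hm0 hf n hn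
  have young : ∀ x y : V, ⟪x, y⟫ ≤ α⁻¹/2*‖x‖^2 + α/2*‖y‖^2 := by
    intro x y
    have h1 := real_inner_le_norm x y
    have hα2 : (0:ℝ) < 2*α := by positivity
    have h2 : 2*α*⟪x,y⟫ ≤ ‖x‖^2 + α^2*‖y‖^2 := by
      nlinarith [sq_nonneg (‖x‖ - α*‖y‖), mul_le_mul_of_nonneg_left h1 (le_of_lt hα2)]
    calc ⟪x,y⟫ = (2*α*⟪x,y⟫)/(2*α) := by field_simp
      _ ≤ (‖x‖^2 + α^2*‖y‖^2)/(2*α) := by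
          exact (div_le_div_iff_of_pos_right hα2).mpr h2
      _ = α⁻¹/2*‖x‖^2 + α/2*‖y‖^2 := by field_simp
  -- key energy inequality
  have key : ∀ k : ℕ, k + 1 ≤ N →
      lam^2/4 * (‖G (m (k+1))‖^2 + ‖(2:ℝ)•G (m (k+1)) - G (m k)‖^2)
      + α/2 * (τ * ∑ j ∈ Finset.range (k+1), ‖v j‖^2)
      + lam^2/4 * ∑ j ∈ Finset.Icc 1 k,
          ‖G (m (j+1)) - (2:ℝ)•G (m j) + G (m (j-1))‖^2
      ≤ (3/4)*lam^2*C0^2 + 3/4*α⁻¹ * (τ * ∑ j ∈ Finset.Icc 1 (k+1), ‖f j‖^2) := by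
    intro k
    induction k with
    | zero =>
      intro _
      have hv0 : m 1 - m 0 = τ • v 0 := by rw [hstep1]; abel
      have h2 : ⟪G (m 1), G (m 1) - G (m 0)⟫ = τ * ⟪G (m 1), G (v 0)⟫ := by
        rw [← map_sub, hv0, map_smul, real_inner_smul_right]
      have h4 : τ*(α*‖v 0‖^2) + lam^2 * ⟪G (m 1), G (m 1) - G (m 0)⟫ = τ * ⟪f 1, v 0⟫ := by
        rw [h2]; linear_combination τ * htest1
      have h1 := aux_inner1 (G (m 1)) (G (m 0))
      have h5 : τ*(α*‖v 0‖^2) + lam^2/2*(‖G (m 1)‖^2 - ‖G (m 0)‖^2 + ‖G (m 1) - G (m 0)‖^2)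
          = τ * ⟪f 1, v 0⟫ := by linear_combination h4 - lam^2/2 * h1
      have hy : τ * ⟪f 1, v 0⟫ ≤ α⁻¹/2*(τ*‖f 1‖^2) + α/2*(τ*‖v 0‖^2) := by
        calc τ * ⟪f 1, v 0⟫
            ≤ τ*(α⁻¹/2*‖f 1‖^2 + α/2*‖v 0‖^2) :=
              mul_le_mul_of_nonneg_left (young (f 1) (v 0)) (le_of_lt hτ)
          _ = α⁻¹/2*(τ*‖f 1‖^2) + α/2*(τ*‖v 0‖^2) := by ring
      have hD : ‖(2:ℝ)•G (m 1) - G (m 0)‖^2 ≤ 2*‖G (m 1)‖^2 + 2*‖G (m 1) - G (m 0)‖^2 := by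
        have e : (2:ℝ)•G (m 1) - G (m 0) = G (m 1) + (G (m 1) - G (m 0)) := by module
        rw [e]
        have h := norm_add_le (G (m 1)) (G (m 1) - G (m 0))
        have h' : ‖G (m 1) + (G (m 1) - G (m 0))‖^2
            ≤ (‖G (m 1)‖ + ‖G (m 1) - G (m 0)‖)^2 :=
          pow_le_pow_left₀ (norm_nonneg _) h 2
        nlinarith [h', sq_nonneg (‖G (m 1)‖ - ‖G (m 1) - G (m 0)‖)]
      have hd4 := mul_le_mul_of_nonneg_left hD (by positivity : (0:ℝ) ≤ lam^2/4)
      have hm' := mul_le_mul_of_nonneg_left hm0 (by positivity : (0:ℝ) ≤ (3/4)*lam^2)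
      have hQ : (0:ℝ) ≤ lam^2 * ‖G (m 1) - G (m 0)‖^2 := by positivity
      have hS : (0:ℝ) ≤ α * (τ * ‖v 0‖^2) := by positivity
      have hIcc0 : Finset.Icc 1 0 = (∅ : Finset ℕ) := by simp
      simp only [Nat.zero_add, hIcc0, Finset.sum_empty, Finset.sum_range_one,
        Finset.Icc_self, Finset.sum_singleton]
      linarith [h5, hy, hd4, hm', hQ, hS]
    | succ k ih =>
      intro hk2
      have ih' := ih (by omega)
      have h1k : (1:ℕ) ≤ k+1 := by omega
      have hstepk := hstep (k+1) h1k (by omega)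
      have htestk := htest (k+1) h1k (by omega)
      simp only [Nat.add_sub_cancel] at hstepk
      have hv : (2*τ) • v (k+1) = (3:ℝ) • m (k+1+1) - (4:ℝ) • m (k+1) + m k := by
        rw [hstepk]; module
      have e1 : G ((2*τ) • v (k+1))
          = (3:ℝ)•G (m (k+1+1)) - (4:ℝ)•G (m (k+1)) + G (m k) := by
        rw [hv]; simp
      have e3 : ⟪G (m (k+1+1)), G ((2*τ) • v (k+1))⟫
          = (2*τ)*⟪G (m (k+1+1)), G (v (k+1))⟫ := by
        rw [map_smul]; exact real_inner_smul_right _ _ _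
      have e2 := aux_inner2 (G (m (k+1+1))) (G (m (k+1))) (G (m k))
      rw [e1] at e3
      -- e3 : ⟪a, 3a-4b+c⟫-form = 2τ⟪a, Gv⟫ ; e2 gives its value
      have h5 : (2*τ)*(α*‖v (k+1)‖^2)
          + lam^2/2*((‖G (m (k+1+1))‖^2 + ‖(2:ℝ)•G (m (k+1+1)) - G (m (k+1))‖^2)
            - (‖G (m (k+1))‖^2 + ‖(2:ℝ)•G (m (k+1)) - G (m k)‖^2)
            + ‖G (m (k+1+1)) - (2:ℝ)•G (m (k+1)) + G (m k)‖^2)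
          = (2*τ) * ⟪f (k+1+1), v (k+1)⟫ := by
        linear_combination (2*τ) * htestk + lam^2 * e3 - lam^2/2 * e2
      have hy : (2*τ) * ⟪f (k+1+1), v (k+1)⟫
          ≤ α⁻¹*(τ*‖f (k+1+1)‖^2) + α*(τ*‖v (k+1)‖^2) := by
        calc (2*τ) * ⟪f (k+1+1), v (k+1)⟫
            ≤ (2*τ)*(α⁻¹/2*‖f (k+1+1)‖^2 + α/2*‖v (k+1)‖^2) :=
              mul_le_mul_of_nonneg_left (young _ _) (by positivity)
          _ = α⁻¹*(τ*‖f (k+1+1)‖^2) + α*(τ*‖v (k+1)‖^2) := by ring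
      have hw : ∀ j : ℕ, (0:ℝ) ≤ ‖G (m (j+1)) - (2:ℝ)•G (m j) + G (m (j-1))‖^2 :=
        fun j => sq_nonneg _
      have hfpos : (0:ℝ) ≤ α⁻¹*(τ*‖f (k+1+1)‖^2) := by positivity
      rw [Finset.sum_range_succ, Finset.sum_Icc_succ_top (by omega : (1:ℕ) ≤ k+1),
        Finset.sum_Icc_succ_top (by omega : (1:ℕ) ≤ k+1+1)]
      simp only [Nat.add_sub_cancel]
      have hwk := hw (k+1)
      simp only [Nat.add_sub_cancel] at hwk ih'
      linarith [h5, hy, ih', hwk, hfpos]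
  obtain _ | k := n
  · have hIcc0 : Finset.Icc 1 (0-1) = (∅ : Finset ℕ) := by simp
    simp only [Finset.range_zero, Finset.sum_empty, hIcc0, mul_zero, add_zero]
    have h1 := le_max_left (C0^2) (((3/4)*lam^2*C0^2 + 3/4*α⁻¹*Cf^2)/c)
    linarith
  · have hkey := key k hn
    have hterm : ∀ j : ℕ, τ^4 * ‖G ((τ^2)⁻¹ • (m (j+1) - (2:ℝ)•m j + m (j-1)))‖^2
        = ‖G (m (j+1)) - (2:ℝ)•G (m j) + G (m (j-1))‖^2 := by
      intro j
      have hG : G ((τ^2)⁻¹ • (m (j+1) - (2:ℝ)•m j + m (j-1)))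
          = (τ^2)⁻¹ • (G (m (j+1)) - (2:ℝ)•G (m j) + G (m (j-1))) := by
        simp [map_smul, map_add, map_sub]
      rw [hG, norm_smul, Real.norm_eq_abs, abs_inv,
        abs_of_pos (by positivity : (0:ℝ) < τ^2), mul_pow]
      field_simp
    have hsum : τ^4 * ∑ j ∈ Finset.Icc 1 (k+1-1),
          ‖G ((τ^2)⁻¹ • (m (j+1) - (2:ℝ)•m j + m (j-1)))‖^2
        = ∑ j ∈ Finset.Icc 1 k, ‖G (m (j+1)) - (2:ℝ)•G (m j) + G (m (j-1))‖^2 := by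
      simp only [Nat.add_sub_cancel]
      rw [Finset.mul_sum]
      exact Finset.sum_congr rfl fun j _ => hterm j
    rw [hsum]
    have hfsub : ∑ j ∈ Finset.Icc 1 (k+1), ‖f j‖^2 ≤ ∑ j ∈ Finset.Icc 1 N, ‖f j‖^2 :=
      Finset.sum_le_sum_of_subset_of_nonneg (Finset.Icc_subset_Icc_right hn)
        (fun i _ _ => sq_nonneg _)
    have hfb : 3/4*α⁻¹*(τ * ∑ j ∈ Finset.Icc 1 (k+1), ‖f j‖^2) ≤ 3/4*α⁻¹*Cf^2 := by
      have : τ * ∑ j ∈ Finset.Icc 1 (k+1), ‖f j‖^2 ≤ Cf^2 :=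
        le_trans (mul_le_mul_of_nonneg_left hfsub (le_of_lt hτ)) hf
      exact mul_le_mul_of_nonneg_left this (by positivity)
    set X1 := ‖G (m (k+1))‖^2 with hX1def
    set X2 := τ * ∑ j ∈ Finset.range (k+1), ‖v j‖^2 with hX2def
    set X3 := ∑ j ∈ Finset.Icc 1 k, ‖G (m (j+1)) - (2:ℝ)•G (m j) + G (m (j-1))‖^2 with hX3def
    have hX1 : (0:ℝ) ≤ X1 := sq_nonneg _
    have hX2 : (0:ℝ) ≤ X2 :=
      mul_nonneg (le_of_lt hτ) (Finset.sum_nonneg fun j _ => sq_nonneg _)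
    have hX3 : (0:ℝ) ≤ X3 := Finset.sum_nonneg fun j _ => sq_nonneg _
    have hex : (0:ℝ) ≤ lam^2/4 * ‖(2:ℝ)•G (m (k+1)) - G (m k)‖^2 := by positivity
    have t1 : c * X1 ≤ lam^2/4 * X1 := mul_le_mul_of_nonneg_right hc1 hX1
    have t2 : c * X2 ≤ α/2 * X2 := mul_le_mul_of_nonneg_right hc2 hX2
    have t3 : c * X3 ≤ lam^2/4 * X3 := mul_le_mul_of_nonneg_right hc1 hX3
    have hmul : (X1 + X2 + X3) * c ≤ (3/4)*lam^2*C0^2 + 3/4*α⁻¹*Cf^2 := by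
      nlinarith [hkey, hfb, t1, t2, t3, hex]
    have hdiv : X1 + X2 + X3 ≤ ((3/4)*lam^2*C0^2 + 3/4*α⁻¹*Cf^2)/c :=
      (le_div_iff₀ hc).mpr hmul
    have h2 := le_max_right (C0^2) (((3/4)*lam^2*C0^2 + 3/4*α⁻¹*Cf^2)/c)
    linarith
end

section
/- Let E be a real inner product space and τ > 0. Suppose m_{j−1}, m_j, m_{j+1}, v_j ∈ E satisfy m_{j+1} = (4/3) m_j − (1/3) m_{j-1} + (2/3) τ v_j and the tangent-space orthogonality ⟨2 m_j − m_{j-1}, v_j⟩ = 0. Then (3/2)‖m_{j+1}‖² − 2‖m_j‖² + (1/2)‖m_{j-1}‖² = (3/2)‖m_{j+1} − 2 m_j + m_{j-1}‖², i.e., equals (3/2) τ⁴ ‖d_t² m_{j+1}‖². -/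
open scoped RealInnerProductSpace

/-! The BDF2 increment `3 m_{j+1} - 4 m_j + m_{j-1}` equals `2τ v_j`, so orthogonality of `v_j` to
the predictor `2 m_j - m_{j-1}` kills the only term of `bdf2_norm_sq_identity` besides the
second difference. -/

section
variable {E : Type*} [NormedAddCommGroup E] [InnerProductSpace ℝ E]

theorem bdf2_norm_sq_identity (x y z : E) :
    (3/2) * ‖z‖ ^ 2 - 2 * ‖y‖ ^ 2 + (1/2) * ‖x‖ ^ 2
      = (3/2) * ‖z - (2 : ℝ) • y + x‖ ^ 2 + ⟪(3 : ℝ) • z - (4 : ℝ) • y + x, (2 : ℝ) • y - x⟫ := by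
  simp only [← real_inner_self_eq_norm_sq, inner_sub_left, inner_sub_right, inner_add_left,
    inner_add_right, real_inner_smul_left, real_inner_smul_right, real_inner_comm x y,
    real_inner_comm x z, real_inner_comm y z]
  ring

theorem pow_four_mul_norm_inv_sq_smul_sq {τ : ℝ} (hτ : τ ≠ 0) (w : E) :
    τ ^ 4 * ‖(τ ^ 2)⁻¹ • w‖ ^ 2 = ‖w‖ ^ 2 := by
  rw [norm_smul, mul_pow, norm_inv, norm_pow, Real.norm_eq_abs, pow_abs, abs_of_nonneg (sq_nonneg τ)]
  field_simp

end

/-- Nodal modulus identity (equation (3.20)): if `m_{j+1} = (4/3)m_j - (1/3)m_{j-1} + (2/3)τ v_j`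
and `⟨2m_j - m_{j-1}, v_j⟩ = 0`, then
`(3/2)‖m_{j+1}‖² - 2‖m_j‖² + (1/2)‖m_{j-1}‖² = (3/2)‖m_{j+1} - 2m_j + m_{j-1}‖²
  = (3/2) τ⁴ ‖d_t² m_{j+1}‖²`. -/
theorem bdf2_nodal_modulus_identity {E : Type*} [NormedAddCommGroup E] [InnerProductSpace ℝ E]
    (τ : ℝ) (hτ : 0 < τ) (mjm mj mjp vj : E)
    (hstep : mjp = (4/3 : ℝ) • mj - (1/3 : ℝ) • mjm + ((2/3) * τ) • vj)
    (horth : ⟪(2 : ℝ) • mj - mjm, vj⟫ = 0) :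
    (3/2) * ‖mjp‖ ^ 2 - 2 * ‖mj‖ ^ 2 + (1/2) * ‖mjm‖ ^ 2
        = (3/2) * ‖mjp - (2 : ℝ) • mj + mjm‖ ^ 2 ∧
    (3/2) * ‖mjp‖ ^ 2 - 2 * ‖mj‖ ^ 2 + (1/2) * ‖mjm‖ ^ 2
        = (3/2) * τ ^ 4 * ‖(τ ^ 2)⁻¹ • (mjp - (2 : ℝ) • mj + mjm)‖ ^ 2 := by
  have hincrement : (3 : ℝ) • mjp - (4 : ℝ) • mj + mjm = (2 * τ) • vj := by
    rw [hstep]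
    module
  have hmodulus : (3/2) * ‖mjp‖ ^ 2 - 2 * ‖mj‖ ^ 2 + (1/2) * ‖mjm‖ ^ 2
      = (3/2) * ‖mjp - (2 : ℝ) • mj + mjm‖ ^ 2 := by
    rw [bdf2_norm_sq_identity, hincrement, real_inner_smul_left, real_inner_comm, horth,
      mul_zero, add_zero]
  refine ⟨hmodulus, ?_⟩
  rw [hmodulus, mul_assoc, pow_four_mul_norm_inv_sq_smul_sq hτ.ne']
end

section
/- Let n ≥ 2 and let (x_j)_{0≤j≤n} and (r_j)_{2≤j≤n} be real sequences satisfying the inhomogeneous linear difference equation (3/2) x_{j+1} − 2 x_j + (1/2) x_{j−1} = r_{j+1} for all 1 ≤ j ≤ n−1. Then x_n = (3/2)(1 − 3^{−n}) x_1 − (1/2)(1 − 3^{−(n−1)}) x_0 + Σ_{i=2}^{n} (1 − 3^{−(n+1−i)}) r_i. -/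
/-- Explicit solution formula for the inhomogeneous linear two-step difference equation
`(3/2) x_{j+1} - 2 x_j + (1/2) x_{j-1} = r_{j+1}` (for `1 ≤ j ≤ n-1`):
`x_n = (3/2)(1 - 3^{-n}) x_1 - (1/2)(1 - 3^{-(n-1)}) x_0 + Σ_{i=2}^n (1 - 3^{-(n+1-i)}) r_i`. -/
theorem bdf2_difference_equation_solution (n : ℕ) (hn : 2 ≤ n) (x r : ℕ → ℝ)
    (hrec : ∀ j : ℕ, 1 ≤ j → j ≤ n - 1 →
      (3/2) * x (j + 1) - 2 * x j + (1/2) * x (j - 1) = r (j + 1)) :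
    x n = (3/2) * (1 - (1/3 : ℝ) ^ n) * x 1
        - (1/2) * (1 - (1/3 : ℝ) ^ (n - 1)) * x 0
        + ∑ i ∈ Finset.Icc 2 n, (1 - (1/3 : ℝ) ^ (n + 1 - i)) * r i := by
  suffices h : ∀ m : ℕ, 1 ≤ m → m ≤ n →
      x m = (3/2) * (1 - (1/3 : ℝ) ^ m) * x 1
        - (1/2) * (1 - (1/3 : ℝ) ^ (m - 1)) * x 0
        + ∑ i ∈ Finset.Icc 2 m, (1 - (1/3 : ℝ) ^ (m + 1 - i)) * r i by
    exact h n (by omega) le_rfl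
  intro m
  induction m using Nat.strong_induction_on with
  | _ m ih =>
  intro hm1 hmn
  obtain rfl | rfl | hm3 : m = 1 ∨ m = 2 ∨ 3 ≤ m := by omega
  · norm_num
  · have h1 := hrec 1 le_rfl (by omega)
    simp at h1
    rw [show Finset.Icc 2 2 = {2} by rfl]
    simp
    norm_num
    linarith
  · obtain ⟨k, rfl⟩ : ∃ k, m = k + 3 := ⟨m - 3, by omega⟩
    have h1 := hrec (k + 2) (by omega) (by omega)
    simp only [show k + 2 + 1 = k + 3 from rfl, show k + 2 - 1 = k + 1 from rfl] at h1
    have IH1 := ih (k + 2) (by omega) (by omega) (by omega)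
    have IH2 := ih (k + 1) (by omega) (by omega) (by omega)
    simp only [Nat.add_sub_cancel, show k + 2 - 1 = k + 1 from rfl,
      show k + 3 - 1 = k + 2 from rfl, show k + 1 - 1 = k from rfl] at IH1 IH2 ⊢
    have key : x (k + 3) = (4/3) * x (k + 2) - (1/3) * x (k + 1) + (2/3) * r (k + 3) := by
      linarith
    rw [key, IH1, IH2]
    have split3 : ∀ f : ℕ → ℝ, ∑ i ∈ Finset.Icc 2 (k + 3), f i
        = (∑ i ∈ Finset.Icc 2 (k + 1), f i) + f (k + 2) + f (k + 3) := by
      intro f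
      rw [show k + 3 = (k + 2) + 1 from rfl, Finset.sum_Icc_succ_top (by omega : 2 ≤ k + 2 + 1),
        show k + 2 = (k + 1) + 1 from rfl, Finset.sum_Icc_succ_top (by omega : 2 ≤ k + 1 + 1)]
    have split2 : ∀ f : ℕ → ℝ, ∑ i ∈ Finset.Icc 2 (k + 2), f i
        = (∑ i ∈ Finset.Icc 2 (k + 1), f i) + f (k + 2) := by
      intro f
      rw [show k + 2 = (k + 1) + 1 from rfl, Finset.sum_Icc_succ_top (by omega : 2 ≤ k + 1 + 1)]
    simp only [split3, split2]
    rw [show k + 3 + 1 - (k + 3) = 1 by omega,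
      show k + 3 + 1 - (k + 2) = 2 by omega,
      show k + 2 + 1 - (k + 2) = 1 by omega]
    have hs : ∑ i ∈ Finset.Icc 2 (k + 1), (1 - (1/3 : ℝ) ^ (k + 3 + 1 - i)) * r i
        = (4/3) * ∑ i ∈ Finset.Icc 2 (k + 1), (1 - (1/3 : ℝ) ^ (k + 2 + 1 - i)) * r i
          - (1/3) * ∑ i ∈ Finset.Icc 2 (k + 1), (1 - (1/3 : ℝ) ^ (k + 1 + 1 - i)) * r i := by
      rw [Finset.mul_sum, Finset.mul_sum, ← Finset.sum_sub_distrib]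
      apply Finset.sum_congr rfl
      intro i hi
      simp only [Finset.mem_Icc] at hi
      rw [show k + 3 + 1 - i = (k + 2 - i) + 2 by omega,
        show k + 2 + 1 - i = (k + 2 - i) + 1 by omega,
        show k + 1 + 1 - i = (k + 2 - i) by omega]
      ring
    rw [hs]
    ring
end

section
/- Let E be a real inner product space, τ > 0, and n ≥ 2. Let (m_j)_{0≤j≤n} and (v_j)_{0≤j≤n−1} in E satisfy: ‖m_0‖ = 1; ⟨m_0, v_0⟩ = 0; m_1 = m_0 + τ v_0; and for all 1 ≤ j ≤ n−1, m_{j+1} = (4/3) m_j − (1/3) m_{j-1} + (2/3) τ v_j with ⟨2 m_j − m_{j-1}, v_j⟩ = 0. Then ‖m_n‖² = 1 + (3/2)(1 − 3^{−n}) τ² ‖v_0‖² + (3/2) τ⁴ Σ_{i=2}^{n} (1 − 3^{−(n+1−i)}) ‖d_t² m_i‖². -/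
open scoped RealInnerProductSpace


lemma bdf2_sum_rec (E : ℕ → ℝ) (j : ℕ) :
    ∑ i ∈ Finset.Icc 2 (j+2), (1 - (1/3:ℝ)^(j+3-i)) * E i
      = (4/3) * (∑ i ∈ Finset.Icc 2 (j+1), (1 - (1/3:ℝ)^(j+2-i)) * E i)
        - (1/3) * (∑ i ∈ Finset.Icc 2 j, (1 - (1/3:ℝ)^(j+1-i)) * E i)
        + (2/3) * E (j+2) := by
  rw [Finset.sum_Icc_succ_top (by omega : 2 ≤ j+2)]
  rw [show j+3-(j+2) = 1 by omega]
  obtain rfl | hj := Nat.eq_zero_or_pos j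
  · norm_num
  · have h3 : ∑ i ∈ Finset.Icc 2 (j+1), (1 - (1/3:ℝ)^(j+1-i)) * E i
        = (∑ i ∈ Finset.Icc 2 j, (1 - (1/3:ℝ)^(j+1-i)) * E i)
          + (1 - (1/3:ℝ)^(j+1-(j+1))) * E (j+1) :=
      Finset.sum_Icc_succ_top (by omega) _
    rw [show j+1-(j+1) = 0 by omega] at h3
    simp only [pow_zero] at h3
    have hpt : ∀ i ∈ Finset.Icc 2 (j+1),
        (1 - (1/3:ℝ)^(j+3-i)) * E i
          = (4/3) * ((1 - (1/3:ℝ)^(j+2-i)) * E i)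
            - (1/3) * ((1 - (1/3:ℝ)^(j+1-i)) * E i) := by
      intro i hi
      simp only [Finset.mem_Icc] at hi
      rw [show j+3-i = (j+1-i)+2 by omega, show j+2-i = (j+1-i)+1 by omega]
      rw [pow_succ, pow_succ]
      ring
    have hsum := Finset.sum_congr rfl hpt
    rw [Finset.sum_sub_distrib, ← Finset.mul_sum, ← Finset.mul_sum] at hsum
    rw [hsum]
    linarith [h3]

lemma bdf2_key {E : Type*} [NormedAddCommGroup E] [InnerProductSpace ℝ E]
    (τ : ℝ) (x y z w : E)
    (hx : x = (4/3 : ℝ) • y - (1/3 : ℝ) • z + ((2/3) * τ) • w)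
    (ho : ⟪(2 : ℝ) • y - z, w⟫ = 0) :
    ‖x‖^2 = (4/3) * ‖y‖^2 - (1/3) * ‖z‖^2 + ‖x - (2:ℝ) • y + z‖^2 := by
  subst hx
  simp only [← real_inner_self_eq_norm_sq, inner_add_left, inner_add_right,
    inner_sub_left, inner_sub_right, real_inner_smul_left, real_inner_smul_right] at *
  linear_combination (4*τ/3) * ho - (4*τ/3) * real_inner_comm w y + (2*τ/3) * real_inner_comm w z

/-- Constraint-violation identity (Proposition 3.7, equation (3.16)):
under the tangent-plane BDF2 dynamics with `‖m 0‖ = 1`,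
`‖m n‖² = 1 + (3/2)(1 - 3^{-n}) τ² ‖v 0‖²
  + (3/2) τ⁴ Σ_{i=2}^n (1 - 3^{-(n+1-i)}) ‖d_t² m i‖²`,
where `d_t² m i = (τ²)⁻¹ • (m i - 2 m (i-1) + m (i-2))`. -/
theorem bdf2_constraint_identity {E : Type*} [NormedAddCommGroup E] [InnerProductSpace ℝ E]
    (τ : ℝ) (hτ : 0 < τ) (n : ℕ) (hn : 2 ≤ n) (m v : ℕ → E)
    (hm0 : ‖m 0‖ = 1)
    (horth0 : ⟪m 0, v 0⟫ = 0)
    (h1 : m 1 = m 0 + τ • v 0)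
    (hstep : ∀ j : ℕ, 1 ≤ j → j ≤ n - 1 →
      m (j + 1) = (4/3 : ℝ) • m j - (1/3 : ℝ) • m (j - 1) + ((2/3) * τ) • v j)
    (horth : ∀ j : ℕ, 1 ≤ j → j ≤ n - 1 →
      ⟪(2 : ℝ) • m j - m (j - 1), v j⟫ = 0) :
    ‖m n‖ ^ 2 = 1 + (3/2) * (1 - (1/3 : ℝ) ^ n) * τ ^ 2 * ‖v 0‖ ^ 2
        + (3/2) * τ ^ 4 * ∑ i ∈ Finset.Icc 2 n,
            (1 - (1/3 : ℝ) ^ (n + 1 - i))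
              * ‖(τ ^ 2)⁻¹ • (m i - (2 : ℝ) • m (i - 1) + m (i - 2))‖ ^ 2 := by
  have main : ∀ k : ℕ, k ≤ n → ‖m k‖^2 =
      1 + (3/2) * (1 - (1/3:ℝ)^k) * τ^2 * ‖v 0‖^2
      + (3/2) * ∑ i ∈ Finset.Icc 2 k, (1 - (1/3:ℝ)^(k+1-i))
          * ‖m i - (2:ℝ) • m (i-1) + m (i-2)‖^2 := by
    intro k
    induction k using Nat.strong_induction_on with
    | _ k ih =>
    intro hk
    match k, ih, hk with
    | 0, _, _ =>
      simp [hm0, Finset.Icc_eq_empty (by omega : ¬ (2:ℕ) ≤ 0)]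
    | 1, _, _ =>
      rw [h1, norm_add_sq_real, real_inner_smul_right, horth0, norm_smul,
        Real.norm_eq_abs, abs_of_pos hτ, hm0,
        Finset.Icc_eq_empty (by omega : ¬ (2:ℕ) ≤ 1)]
      simp
      ring
    | (j+2), ih, hk =>
      have ih1 := ih (j+1) (by omega) (by omega)
      have ih0 := ih j (by omega) (by omega)
      have hrec := bdf2_key τ (m (j+2)) (m (j+1)) (m ((j+1)-1)) (v (j+1))
        (hstep (j+1) (by omega) (by omega)) (horth (j+1) (by omega) (by omega))
      simp only [Nat.add_sub_cancel] at hrec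
      rw [hrec, ih1, ih0]
      have hS := bdf2_sum_rec (fun i => ‖m i - (2:ℝ) • m (i-1) + m (i-2)‖^2) j
      rw [show (j+2)+1 = j+3 from rfl,
        show m ((j+2)-1) = m (j+1) from rfl, show m ((j+2)-2) = m j from rfl] at *
      rw [hS]
      rw [pow_succ (1/3:ℝ) (j+1), pow_succ (1/3:ℝ) j]
      ring
  have hτ2 : (τ:ℝ) ≠ 0 := ne_of_gt hτ
  have hconv : ∀ i : ℕ,
      (1 - (1/3:ℝ)^(n+1-i)) * ‖(τ^2)⁻¹ • (m i - (2:ℝ) • m (i-1) + m (i-2))‖^2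
        = (τ^4)⁻¹ * ((1 - (1/3:ℝ)^(n+1-i)) * ‖m i - (2:ℝ) • m (i-1) + m (i-2)‖^2) := by
    intro i
    rw [norm_smul, Real.norm_eq_abs, mul_pow, sq_abs, ← inv_pow, ← pow_mul]
    ring
  rw [main n le_rfl]
  have : ∑ i ∈ Finset.Icc 2 n,
      (1 - (1/3:ℝ)^(n+1-i)) * ‖(τ^2)⁻¹ • (m i - (2:ℝ) • m (i-1) + m (i-2))‖^2
      = (τ^4)⁻¹ * ∑ i ∈ Finset.Icc 2 n,
          (1 - (1/3:ℝ)^(n+1-i)) * ‖m i - (2:ℝ) • m (i-1) + m (i-2)‖^2 := by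
    rw [Finset.mul_sum]
    exact Finset.sum_congr rfl fun i _ => hconv i
  rw [this]
  have h4 : (τ:ℝ)^4 ≠ 0 := pow_ne_zero _ hτ2
  field_simp
end

section
/- Let E be a real inner product space, τ > 0, and let (m_j)_{j≥0} and (v_j)_{j≥0} in E satisfy: ‖m_0‖ = 1; ⟨m_0, v_0⟩ = 0; m_1 = m_0 + τ v_0; and for all j ≥ 1, m_{j+1} = (4/3) m_j − (1/3) m_{j-1} + (2/3) τ v_j with ⟨2 m_j − m_{j-1}, v_j⟩ = 0. Then the sequence (‖m_j‖)_{j≥0} is nondecreasing and ‖m_j‖ ≥ 1 for all j ≥ 0. -/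
open scoped RealInnerProductSpace

lemma bessel2 {E : Type*} [NormedAddCommGroup E] [InnerProductSpace ℝ E]
    (u v y : E) (h : ⟪u, v⟫ = 0) :
    ⟪y, u⟫^2 * ‖v‖^2 + ⟪y, v⟫^2 * ‖u‖^2 ≤ ‖y‖^2 * (‖u‖^2 * ‖v‖^2) := by
  set w : E := (⟪y, u⟫ * ‖v‖^2) • u + (⟪y, v⟫ * ‖u‖^2) • v with hw
  have hvu : ⟪v, u⟫ = 0 := by rw [real_inner_comm]; exact h
  have hyw : ⟪y, w⟫ = ⟪y, u⟫^2 * ‖v‖^2 + ⟪y, v⟫^2 * ‖u‖^2 := by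
    simp only [hw, inner_add_right, real_inner_smul_right]; ring
  have hww : ⟪w, w⟫ = (‖u‖^2 * ‖v‖^2) * ⟪y, w⟫ := by
    rw [hyw]
    simp only [hw, inner_add_left, inner_add_right, real_inner_smul_left,
      real_inner_smul_right, h, hvu]
    rw [real_inner_self_eq_norm_sq u, real_inner_self_eq_norm_sq v]
    ring
  have hcs : ⟪y, w⟫ * ⟪y, w⟫ ≤ ⟪y, y⟫ * ⟪w, w⟫ := real_inner_mul_inner_self_le y w
  have hP : 0 ≤ ⟪y, w⟫ := by rw [hyw]; positivity
  have hK : 0 ≤ ‖y‖^2 * (‖u‖^2 * ‖v‖^2) := by positivity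
  have hyy : ⟪y, y⟫ = ‖y‖^2 := real_inner_self_eq_norm_sq y
  rw [hww, hyy] at hcs
  rcases hP.eq_or_lt with h0 | h0
  · rw [← hyw, ← h0]; exact hK
  · rw [← hyw]
    nlinarith [hcs, h0]

lemma key_real (a b s d n t : ℝ) (ha : 0 ≤ a) (hb : 0 ≤ b) (hn : 0 ≤ n)
    (hba : b ≤ a) (hs : s ≤ a*b) (hd : d^2 ≤ a^2*n^2)
    (hK : (2*s - b^2)^2*n^2 + 4*d^2*(4*a^2-4*s+b^2) ≤ b^2*((4*a^2-4*s+b^2)*n^2)) :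
    a^2 ≤ (16*a^2 - 8*s + b^2)/9 + (4/3)*t*d + t^2*n^2 := by
  rcases hn.eq_or_lt with hn0 | hnpos
  · have hn0' : n = 0 := hn0.symm
    subst hn0'
    have hd2' : d^2 = 0 := le_antisymm (by nlinarith) (sq_nonneg d)
    have hd0 : d = 0 := pow_eq_zero_iff (by norm_num : (2:ℕ) ≠ 0) |>.mp hd2'
    subst hd0
    nlinarith [mul_nonneg (sub_nonneg.2 hba) (by linarith : (0:ℝ) ≤ 7*a - b)]
  · set U : ℝ := 4*a^2 - 4*s + b^2 with hUdef
    have hU0 : 0 ≤ U := by rw [hUdef]; nlinarith [sq_nonneg (2*a - b)]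
    rcases hU0.eq_or_lt with hU | hU
    · -- degenerate: U = 0 forces a = b = 0
      have hUe : (0:ℝ) = 4*a^2 - 4*s + b^2 := by rw [hU, hUdef]
      have hb2a : b = 2*a := by nlinarith [sq_nonneg (2*a - b)]
      have ha0 : a = 0 := by linarith
      have hb0 : b = 0 := by linarith
      have hs0 : s = 0 := by nlinarith
      have hd2' : d^2 = 0 := le_antisymm (by nlinarith) (sq_nonneg d)
      have hd0 : d = 0 := pow_eq_zero_iff (by norm_num : (2:ℕ) ≠ 0) |>.mp hd2'
      rw [ha0, hs0, hd0]; nlinarith [sq_nonneg (t*n)]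
    · have h2 : 4*d^2*U ≤ (b^2*U - (2*s - b^2)^2)*n^2 := by nlinarith [hK]
      have h3 : b^2*U - (2*s - b^2)^2 ≤ (7*a^2 - 8*s + b^2)*U := by
        rw [hUdef]
        nlinarith [sq_nonneg (6*s - 5*a^2 - b^2),
          mul_nonneg (mul_nonneg ha ha) (mul_nonneg (add_nonneg ha hb) (sub_nonneg.2 hba))]
      have h4' : 4*d^2*U ≤ ((7*a^2 - 8*s + b^2)*n^2)*U := by
        nlinarith [mul_le_mul_of_nonneg_right h3 (sq_nonneg n)]
      have h4 : 4*d^2 ≤ (7*a^2 - 8*s + b^2)*n^2 := le_of_mul_le_mul_right (by linarith) hU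
      nlinarith [sq_nonneg (3*t*n^2 + 2*d), h4, mul_pos hnpos hnpos]

lemma key_vec {E : Type*} [NormedAddCommGroup E] [InnerProductSpace ℝ E]
    (x y v : E) (t : ℝ) (hxy : ‖y‖ ≤ ‖x‖) (h : ⟪(2:ℝ) • x - y, v⟫ = 0) :
    ‖x‖ ≤ ‖(4/3 : ℝ) • x - (1/3 : ℝ) • y + t • v‖ := by
  have hyv : ⟪y, v⟫ = 2 * ⟪x, v⟫ := by
    rw [inner_sub_left, real_inner_smul_left] at h
    linarith
  have hz2 : ‖(4/3 : ℝ) • x - (1/3 : ℝ) • y + t • v‖^2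
      = (16*‖x‖^2 - 8*⟪x,y⟫ + ‖y‖^2)/9 + (4/3)*t*⟪x,v⟫ + t^2*‖v‖^2 := by
    rw [← real_inner_self_eq_norm_sq]
    simp only [inner_add_left, inner_add_right, inner_sub_left, inner_sub_right,
      real_inner_smul_left, real_inner_smul_right]
    rw [real_inner_comm x y, real_inner_comm x v, real_inner_comm y v, hyv,
      real_inner_self_eq_norm_sq x, real_inner_self_eq_norm_sq y,
      real_inner_self_eq_norm_sq v]
    ring
  have hcs : ⟪x,y⟫ ≤ ‖x‖*‖y‖ := real_inner_le_norm x y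
  have hd2 : ⟪x,v⟫^2 ≤ ‖x‖^2*‖v‖^2 := by
    have h1 := abs_real_inner_le_norm x v
    nlinarith [abs_nonneg (⟪x, v⟫ : ℝ), sq_abs (⟪x, v⟫ : ℝ), norm_nonneg x, norm_nonneg v]
  have hbes := bessel2 ((2:ℝ) • x - y) v y h
  have hu2 : ‖(2:ℝ) • x - y‖^2 = 4*‖x‖^2 - 4*⟪x,y⟫ + ‖y‖^2 := by
    rw [← real_inner_self_eq_norm_sq]
    simp only [inner_sub_left, inner_sub_right, real_inner_smul_left, real_inner_smul_right]
    rw [real_inner_comm x y, real_inner_self_eq_norm_sq x, real_inner_self_eq_norm_sq y]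
    ring
  have hyu : ⟪y, (2:ℝ) • x - y⟫ = 2*⟪x,y⟫ - ‖y‖^2 := by
    rw [inner_sub_right, real_inner_smul_right, real_inner_comm x y,
      real_inner_self_eq_norm_sq y]
  rw [hyu, hu2, hyv] at hbes
  have hK : (2*⟪x,y⟫ - ‖y‖^2)^2*‖v‖^2 + 4*⟪x,v⟫^2*(4*‖x‖^2-4*⟪x,y⟫+‖y‖^2)
      ≤ ‖y‖^2*((4*‖x‖^2-4*⟪x,y⟫+‖y‖^2)*‖v‖^2) := by nlinarith [hbes]
  have hfin := key_real ‖x‖ ‖y‖ ⟪x,y⟫ ⟪x,v⟫ ‖v‖ t (norm_nonneg x) (norm_nonneg y)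
    (norm_nonneg v) hxy hcs hd2 hK
  rw [← hz2] at hfin
  nlinarith [norm_nonneg ((4/3 : ℝ) • x - (1/3 : ℝ) • y + t • v), norm_nonneg x]

/-- Under the tangent-plane BDF2 dynamics with `‖m 0‖ = 1`, the sequence of norms
`(‖m j‖)` is nondecreasing and `‖m j‖ ≥ 1` for all `j`. -/
theorem bdf2_modulus_nondecreasing {E : Type*} [NormedAddCommGroup E] [InnerProductSpace ℝ E]
    (τ : ℝ) (hτ : 0 < τ) (m v : ℕ → E)
    (hm0 : ‖m 0‖ = 1)
    (horth0 : ⟪m 0, v 0⟫ = 0)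
    (h1 : m 1 = m 0 + τ • v 0)
    (hstep : ∀ j : ℕ, 1 ≤ j →
      m (j + 1) = (4/3 : ℝ) • m j - (1/3 : ℝ) • m (j - 1) + ((2/3) * τ) • v j)
    (horth : ∀ j : ℕ, 1 ≤ j → ⟪(2 : ℝ) • m j - m (j - 1), v j⟫ = 0) :
    Monotone (fun j : ℕ => ‖m j‖) ∧ ∀ j : ℕ, 1 ≤ ‖m j‖ := by
  have hstep01 : ‖m 0‖ ≤ ‖m 1‖ := by
    have h2 : ‖m 1‖^2 = ‖m 0‖^2 + τ^2 * ‖v 0‖^2 := by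
      rw [h1, norm_add_sq_real, real_inner_smul_right, horth0, norm_smul,
        Real.norm_eq_abs, mul_pow, sq_abs]
      ring
    nlinarith [norm_nonneg (m 1), norm_nonneg (m 0), sq_nonneg (τ * ‖v 0‖)]
  have hsucc : ∀ j : ℕ, ‖m j‖ ≤ ‖m (j + 1)‖ := by
    intro j
    induction j with
    | zero => exact hstep01
    | succ k ih =>
      have hk1 : 1 ≤ k + 1 := by omega
      have hs := hstep (k + 1) hk1
      have ho := horth (k + 1) hk1
      simp only [Nat.add_sub_cancel] at hs ho
      rw [hs]
      exact key_vec (m (k + 1)) (m k) (v (k + 1)) ((2/3) * τ) ih ho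
  have hmono : Monotone fun j : ℕ => ‖m j‖ := monotone_nat_of_le_succ hsucc
  refine ⟨hmono, fun j => ?_⟩
  calc (1:ℝ) = ‖m 0‖ := hm0.symm
    _ ≤ ‖m j‖ := hmono (Nat.zero_le j)
end

section
/- Let E be a real inner product space, τ > 0, n ≥ 2, K ≥ 0, and let (m_j)_{0≤j≤n}, (v_j)_{0≤j≤n−1} in E satisfy: ‖m_0‖ = 1; ⟨m_0, v_0⟩ = 0; m_1 = m_0 + τ v_0; for all 1 ≤ j ≤ n−1, m_{j+1} = (4/3) m_j − (1/3) m_{j-1} + (2/3) τ v_j with ⟨2 m_j − m_{j-1}, v_j⟩ = 0; and the discrete regularity bound ‖v_0‖² + τ² Σ_{i=2}^{n} ‖d_t² m_i‖² ≤ K. Then the deviation from the unit-length constraint satisfies 0 ≤ ‖m_n‖² − 1 ≤ (3/2) K τ². -/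
open scoped RealInnerProductSpace

private lemma bdf2_key_identity {E : Type*} [NormedAddCommGroup E] [InnerProductSpace ℝ E]
    (x y w : E) (τ : ℝ) (horth : ⟪(2 : ℝ) • x - y, w⟫ = 0) :
    3 * ‖(4/3 : ℝ) • x - (1/3 : ℝ) • y + ((2/3) * τ) • w‖ ^ 2
      - 4 * ‖x‖ ^ 2 + ‖y‖ ^ 2
    = 3 * ‖((4/3 : ℝ) • x - (1/3 : ℝ) • y + ((2/3) * τ) • w) - (2 : ℝ) • x + y‖ ^ 2 := by
  have horth' : 2 * ⟪x, w⟫ - ⟪y, w⟫ = 0 := by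
    simpa [inner_sub_left, real_inner_smul_left] using horth
  simp only [← real_inner_self_eq_norm_sq]
  simp only [inner_add_left, inner_add_right, inner_sub_left, inner_sub_right,
    real_inner_smul_left, real_inner_smul_right]
  rw [real_inner_comm y x]
  linear_combination (4 * τ) * horth' - (4 * τ) * (real_inner_comm w x)
    + (2 * τ) * (real_inner_comm w y)

/-- Second-order constraint-violation estimate (Remark 3.7): under the tangent-plane
BDF2 dynamics with `‖m 0‖ = 1` and the discrete regularity bound
`‖v 0‖² + τ² Σ_{i=2}^n ‖d_t² m i‖² ≤ K`, it holds that
`0 ≤ ‖m n‖² - 1 ≤ (3/2) K τ²`, where `d_t² m i = (τ²)⁻¹ • (m i - 2 m (i-1) + m (i-2))`. -/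
theorem bdf2_constraint_violation_second_order {E : Type*}
    [NormedAddCommGroup E] [InnerProductSpace ℝ E]
    (τ : ℝ) (hτ : 0 < τ) (n : ℕ) (hn : 2 ≤ n) (K : ℝ) (hK : 0 ≤ K) (m v : ℕ → E)
    (hm0 : ‖m 0‖ = 1)
    (horth0 : ⟪m 0, v 0⟫ = 0)
    (h1 : m 1 = m 0 + τ • v 0)
    (hstep : ∀ j : ℕ, 1 ≤ j → j ≤ n - 1 →
      m (j + 1) = (4/3 : ℝ) • m j - (1/3 : ℝ) • m (j - 1) + ((2/3) * τ) • v j)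
    (horth : ∀ j : ℕ, 1 ≤ j → j ≤ n - 1 →
      ⟪(2 : ℝ) • m j - m (j - 1), v j⟫ = 0)
    (hreg : ‖v 0‖ ^ 2 + τ ^ 2 * ∑ i ∈ Finset.Icc 2 n,
        ‖(τ ^ 2)⁻¹ • (m i - (2 : ℝ) • m (i - 1) + m (i - 2))‖ ^ 2 ≤ K) :
    0 ≤ ‖m n‖ ^ 2 - 1 ∧ ‖m n‖ ^ 2 - 1 ≤ (3/2) * K * τ ^ 2 := by
  -- abbreviations
  set b : ℕ → ℝ := fun i => ‖m i - (2 : ℝ) • m (i - 1) + m (i - 2)‖ ^ 2 with hb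
  -- value of a 1
  have ha1 : ‖m 1‖ ^ 2 = 1 + τ ^ 2 * ‖v 0‖ ^ 2 := by
    rw [h1, norm_add_sq_real, real_inner_smul_right, horth0, norm_smul, hm0,
      Real.norm_eq_abs, abs_of_pos hτ]
    ring
  -- key identity per step
  have key : ∀ j : ℕ, 1 ≤ j → j ≤ n - 1 →
      3 * ‖m (j + 1)‖ ^ 2 - 4 * ‖m j‖ ^ 2 + ‖m (j - 1)‖ ^ 2
        = 3 * ‖m (j + 1) - (2 : ℝ) • m j + m (j - 1)‖ ^ 2 := by
    intro j hj1 hj2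
    rw [hstep j hj1 hj2]
    exact bdf2_key_identity (m j) (m (j - 1)) (v j) τ (horth j hj1 hj2)
  -- main induction
  have main : ∀ j : ℕ, 1 ≤ j → j ≤ n →
      0 ≤ ‖m j‖ ^ 2 - ‖m (j - 1)‖ ^ 2 ∧ 1 ≤ ‖m j‖ ^ 2 ∧
      ‖m j‖ ^ 2 + (1/2) * (‖m j‖ ^ 2 - ‖m (j - 1)‖ ^ 2)
        = 1 + (3/2) * τ ^ 2 * ‖v 0‖ ^ 2 + (3/2) * ∑ i ∈ Finset.Icc 2 j, b i := by
    intro j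
    induction j with
    | zero => omega
    | succ j ih =>
      intro _ hjn
      rcases Nat.eq_zero_or_pos j with rfl | hj1
      · -- base case j+1 = 1
        have hempty : Finset.Icc 2 1 = (∅ : Finset ℕ) := by decide
        refine ⟨?_, ?_, ?_⟩ <;>
          simp only [Nat.sub_self, hempty, Finset.sum_empty, ha1, hm0] <;> nlinarith [sq_nonneg ‖v 0‖]
      · -- inductive step, j ≥ 1
        have hjn' : j ≤ n := by omega
        have hjn1 : j ≤ n - 1 := by omega
        obtain ⟨ihe, iha, ihF⟩ := ih hj1 hjn'
        have hkey := key j hj1 hjn1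
        have e1 : j + 1 - 1 = j := by omega
        have e2 : j + 1 - 2 = j - 1 := by omega
        have hbj : b (j + 1) = ‖m (j + 1) - (2 : ℝ) • m j + m (j - 1)‖ ^ 2 := by
          rw [hb]; simp only [e1, e2]
        have hbnn : 0 ≤ b (j + 1) := by rw [hbj]; positivity
        have hsum : ∑ i ∈ Finset.Icc 2 (j + 1), b i
            = (∑ i ∈ Finset.Icc 2 j, b i) + b (j + 1) := by
          rw [Finset.sum_Icc_succ_top (by omega : 2 ≤ j + 1)]
        rw [e1]
        refine ⟨?_, ?_, ?_⟩
        · rw [← hbj] at hkey; linarith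
        · rw [← hbj] at hkey; linarith
        · rw [← hbj] at hkey; rw [hsum]; linarith
  obtain ⟨hen, han, hFn⟩ := main n (by omega) le_rfl
  -- convert the regularity bound
  have hτ2 : (0 : ℝ) < τ ^ 2 := by positivity
  have hconv : τ ^ 2 * ∑ i ∈ Finset.Icc 2 n,
      ‖(τ ^ 2)⁻¹ • (m i - (2 : ℝ) • m (i - 1) + m (i - 2))‖ ^ 2
      = (τ ^ 2)⁻¹ * ∑ i ∈ Finset.Icc 2 n, b i := by
    rw [Finset.mul_sum, Finset.mul_sum]
    refine Finset.sum_congr rfl fun i _ => ?_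
    simp only [hb, norm_smul, Real.norm_eq_abs, abs_of_pos (inv_pos.mpr hτ2)]
    field_simp
  rw [hconv] at hreg
  have hbsum_nn : 0 ≤ ∑ i ∈ Finset.Icc 2 n, b i :=
    Finset.sum_nonneg fun i _ => by rw [hb]; positivity
  have hmul : τ ^ 2 * ‖v 0‖ ^ 2 + ∑ i ∈ Finset.Icc 2 n, b i ≤ K * τ ^ 2 := by
    have := mul_le_mul_of_nonneg_left hreg (le_of_lt hτ2)
    rw [mul_add, ← mul_assoc, mul_inv_cancel₀ (ne_of_gt hτ2), one_mul] at this
    linarith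
  constructor
  · linarith
  · linarith
end

section
/- Let V and H be real inner product spaces, G : V → H a linear map, α, λ, τ > 0, and n ≥ 2. Let (m_j)_{0≤j≤n}, (v_j)_{1≤j≤n−1}, (f_j)_{2≤j≤n} in V satisfy, for all 1 ≤ j ≤ n−1, the BDF2 step m_{j+1} = (4/3)m_j − (1/3)m_{j-1} + (2/3)τ v_j together with the tested equation α‖v_j‖² + λ²⟨G m_{j+1}, G v_j⟩ = ⟨f_{j+1}, v_j⟩. Then (λ²/2) τ^{1/2} ‖G m_n‖² + (λ²/2) τ^{5/2} Σ_{j=1}^{n−1} ‖G d_t m_{j+1}‖² ≤ (τ^{3/2}/(4α)) Σ_{j=1}^{n−1} ‖f_{j+1}‖² + (λ²/2) τ^{1/2} ‖G m_1‖² + (λ²/4) τ Σ_{j=1}^{n−1} ‖G m_{j+1}‖² + (λ²/4) τ⁴ Σ_{j=1}^{n−1} ‖G d_t² m_{j+1}‖². -/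
open scoped RealInnerProductSpace

lemma bdf2_key_step {H : Type*} [NormedAddCommGroup H] [InnerProductSpace ℝ H]
    (lam τ α : ℝ) (hα : 0 < α) (hτ : 0 < τ) (a b w : H) (F : ℝ) (hF : 0 ≤ F)
    (hmain : lam ^ 2 * ⟪a, τ⁻¹ • (a - b) + (2*τ)⁻¹ • w⟫ ≤ F / (4*α)) :
    (lam ^ 2 / 2) * τ ^ ((1:ℝ)/2) * (‖a‖ ^ 2 - ‖b‖ ^ 2)
      + (lam ^ 2 / 2) * τ ^ ((5:ℝ)/2) * ‖τ⁻¹ • (a - b)‖ ^ 2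
    ≤ (τ ^ ((3:ℝ)/2) / (4*α)) * F + (lam ^ 2 / 4) * τ * ‖a‖ ^ 2
      + (lam ^ 2 / 4) * τ ^ 4 * ‖(τ ^ 2)⁻¹ • w‖ ^ 2 := by
  have hs : 0 < τ ^ ((1:ℝ)/2) := Real.rpow_pos_of_pos hτ _
  set s : ℝ := τ ^ ((1:ℝ)/2) with hs_def
  have hs2 : s ^ 2 = τ := by
    rw [hs_def, ← Real.rpow_natCast (τ ^ ((1:ℝ)/2)) 2, ← Real.rpow_mul hτ.le]
    norm_num
  have t52 : τ ^ ((5:ℝ)/2) = τ ^ 2 * s := by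
    rw [hs_def, show ((5:ℝ)/2) = ((2:ℕ):ℝ) + 1/2 by norm_num, Real.rpow_add hτ,
      Real.rpow_natCast]
  have t32 : τ ^ ((3:ℝ)/2) = τ * s := by
    rw [hs_def, show ((3:ℝ)/2) = ((1:ℕ):ℝ) + 1/2 by norm_num, Real.rpow_add hτ,
      Real.rpow_natCast, pow_one]
  have hτ' : τ ≠ 0 := hτ.ne'
  have hin : ⟪a, τ⁻¹ • (a - b) + (2*τ)⁻¹ • w⟫
      = τ⁻¹ * (‖a‖ ^ 2 - ⟪a, b⟫) + (2*τ)⁻¹ * ⟪a, w⟫ := by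
    rw [inner_add_right, inner_smul_right, inner_smul_right, inner_sub_right,
      real_inner_self_eq_norm_sq]
  have hdn : ‖τ⁻¹ • (a - b)‖ ^ 2 = τ⁻¹ ^ 2 * (‖a‖ ^ 2 - 2 * ⟪a, b⟫ + ‖b‖ ^ 2) := by
    rw [norm_smul, mul_pow, ← norm_sub_sq_real]
    simp [abs_of_pos hτ]
  have hwn : ‖(τ ^ 2)⁻¹ • w‖ ^ 2 = (τ ^ 2)⁻¹ ^ 2 * ‖w‖ ^ 2 := by
    rw [norm_smul, mul_pow]
    simp [abs_of_pos hτ]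
  rw [hin] at hmain
  rw [hdn, hwn, t52, t32]
  have hq : -⟪a, w⟫ ≤ ‖a‖ * ‖w‖ := by
    have h1 := abs_real_inner_le_norm a w
    linarith [neg_abs_le ⟪a, w⟫]
  have hmain2 : lam ^ 2 * (‖a‖ ^ 2 - ⟪a, b⟫) + (lam ^ 2 / 2) * ⟪a, w⟫ ≤ τ * (F / (4*α)) := by
    have h := mul_le_mul_of_nonneg_left hmain hτ.le
    have e : τ * (lam ^ 2 * (τ⁻¹ * (‖a‖ ^ 2 - ⟪a, b⟫) + (2*τ)⁻¹ * ⟪a, w⟫))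
        = lam ^ 2 * (‖a‖ ^ 2 - ⟪a, b⟫) + (lam ^ 2 / 2) * ⟪a, w⟫ := by
      field_simp
    linarith [e ▸ h]
  have hmul : lam ^ 2 * s * (‖a‖ ^ 2 - ⟪a, b⟫) + (lam ^ 2 / 2) * s * ⟪a, w⟫
      ≤ τ * s * (F / (4*α)) := by
    have h := mul_le_mul_of_nonneg_left hmain2 hs.le
    have e1 : s * (lam ^ 2 * (‖a‖ ^ 2 - ⟪a, b⟫) + (lam ^ 2 / 2) * ⟪a, w⟫)
        = lam ^ 2 * s * (‖a‖ ^ 2 - ⟪a, b⟫) + (lam ^ 2 / 2) * s * ⟪a, w⟫ := by ring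
    have e2 : s * (τ * (F / (4*α))) = τ * s * (F / (4*α)) := by ring
    linarith [e1 ▸ e2 ▸ h]
  have hyoung : s * (‖a‖ * ‖w‖) ≤ (τ * ‖a‖ ^ 2 + ‖w‖ ^ 2) / 2 := by
    nlinarith [sq_nonneg (s * ‖a‖ - ‖w‖), hs2]
  have hq2 : -((lam ^ 2 / 2) * s * ⟪a, w⟫) ≤ (lam ^ 2 / 2) * (s * (‖a‖ * ‖w‖)) := by
    have h := mul_le_mul_of_nonneg_left hq (by positivity : (0:ℝ) ≤ lam ^ 2 / 2 * s)
    have e1 : lam ^ 2 / 2 * s * -⟪a, w⟫ = -((lam ^ 2 / 2) * s * ⟪a, w⟫) := by ring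
    have e2 : lam ^ 2 / 2 * s * (‖a‖ * ‖w‖) = (lam ^ 2 / 2) * (s * (‖a‖ * ‖w‖)) := by ring
    linarith [e1 ▸ e2 ▸ h]
  have hy2 : (lam ^ 2 / 2) * (s * (‖a‖ * ‖w‖)) ≤ (lam ^ 2 / 4) * (τ * ‖a‖ ^ 2 + ‖w‖ ^ 2) := by
    have h := mul_le_mul_of_nonneg_left hyoung (by positivity : (0:ℝ) ≤ lam ^ 2 / 2)
    have e : lam ^ 2 / 2 * ((τ * ‖a‖ ^ 2 + ‖w‖ ^ 2) / 2)
        = (lam ^ 2 / 4) * (τ * ‖a‖ ^ 2 + ‖w‖ ^ 2) := by ring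
    linarith [e ▸ h]
  have eL : (lam ^ 2 / 2) * s * (‖a‖ ^ 2 - ‖b‖ ^ 2)
      + (lam ^ 2 / 2) * (τ ^ 2 * s) * (τ⁻¹ ^ 2 * (‖a‖ ^ 2 - 2 * ⟪a, b⟫ + ‖b‖ ^ 2))
      = lam ^ 2 * s * (‖a‖ ^ 2 - ⟪a, b⟫) := by
    field_simp; ring
  have eR : (lam ^ 2 / 4) * τ ^ 4 * ((τ ^ 2)⁻¹ ^ 2 * ‖w‖ ^ 2) = (lam ^ 2 / 4) * ‖w‖ ^ 2 := by
    field_simp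
  rw [eL, eR]
  have eF : τ * s / (4*α) * F = τ * s * (F / (4*α)) := by ring
  have eW : lam ^ 2 / 4 * (τ * ‖a‖ ^ 2 + ‖w‖ ^ 2)
      = lam ^ 2 / 4 * τ * ‖a‖ ^ 2 + lam ^ 2 / 4 * ‖w‖ ^ 2 := by ring
  linarith [hmul, hq2, hy2, eF, eW]

/-- Summed estimate from the proof of Proposition 3.10 (key step for
`τ‖∇∂_t m_{hτ}‖ → 0`): under the tested BDF2 steps,
`(λ²/2) τ^{1/2} ‖G m n‖² + (λ²/2) τ^{5/2} Σ_{j=1}^{n-1} ‖G d_t m (j+1)‖²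
  ≤ (τ^{3/2}/(4α)) Σ ‖f (j+1)‖² + (λ²/2) τ^{1/2} ‖G m 1‖²
    + (λ²/4) τ Σ ‖G m (j+1)‖² + (λ²/4) τ⁴ Σ ‖G d_t² m (j+1)‖²`,
where `d_t m (j+1) = τ⁻¹ • (m (j+1) - m j)` and
`d_t² m (j+1) = (τ²)⁻¹ • (m (j+1) - 2 m j + m (j-1))`. -/
theorem bdf2_tau_gradient_estimate {V H : Type*}
    [NormedAddCommGroup V] [InnerProductSpace ℝ V]
    [NormedAddCommGroup H] [InnerProductSpace ℝ H]
    (G : V →ₗ[ℝ] H) (α lam τ : ℝ) (hα : 0 < α) (hlam : 0 < lam) (hτ : 0 < τ)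
    (n : ℕ) (hn : 2 ≤ n) (m v f : ℕ → V)
    (hstep : ∀ j : ℕ, 1 ≤ j → j ≤ n - 1 →
      m (j + 1) = (4/3 : ℝ) • m j - (1/3 : ℝ) • m (j - 1) + ((2/3) * τ) • v j)
    (htest : ∀ j : ℕ, 1 ≤ j → j ≤ n - 1 →
      α * ‖v j‖ ^ 2 + lam ^ 2 * ⟪G (m (j + 1)), G (v j)⟫ = ⟪f (j + 1), v j⟫) :
    (lam ^ 2 / 2) * τ ^ ((1 : ℝ)/2) * ‖G (m n)‖ ^ 2
      + (lam ^ 2 / 2) * τ ^ ((5 : ℝ)/2) * ∑ j ∈ Finset.Icc 1 (n - 1),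
          ‖G (τ⁻¹ • (m (j + 1) - m j))‖ ^ 2
    ≤ (τ ^ ((3 : ℝ)/2) / (4 * α)) * ∑ j ∈ Finset.Icc 1 (n - 1), ‖f (j + 1)‖ ^ 2
      + (lam ^ 2 / 2) * τ ^ ((1 : ℝ)/2) * ‖G (m 1)‖ ^ 2
      + (lam ^ 2 / 4) * τ * ∑ j ∈ Finset.Icc 1 (n - 1), ‖G (m (j + 1))‖ ^ 2
      + (lam ^ 2 / 4) * τ ^ 4 * ∑ j ∈ Finset.Icc 1 (n - 1),
          ‖G ((τ ^ 2)⁻¹ • (m (j + 1) - (2 : ℝ) • m j + m (j - 1)))‖ ^ 2 := by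
  have hτ' : τ ≠ 0 := hτ.ne'
  set S := Finset.Icc 1 (n - 1) with hS
  -- per-step estimate
  have key : ∀ j ∈ S,
      (lam ^ 2 / 2) * τ ^ ((1:ℝ)/2) * (‖G (m (j + 1))‖ ^ 2 - ‖G (m j)‖ ^ 2)
        + (lam ^ 2 / 2) * τ ^ ((5:ℝ)/2) * ‖G (τ⁻¹ • (m (j + 1) - m j))‖ ^ 2
      ≤ (τ ^ ((3:ℝ)/2) / (4 * α)) * ‖f (j + 1)‖ ^ 2
        + (lam ^ 2 / 4) * τ * ‖G (m (j + 1))‖ ^ 2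
        + (lam ^ 2 / 4) * τ ^ 4
            * ‖G ((τ ^ 2)⁻¹ • (m (j + 1) - (2 : ℝ) • m j + m (j - 1)))‖ ^ 2 := by
    intro j hj
    rw [hS, Finset.mem_Icc] at hj
    obtain ⟨hj1, hj2⟩ := hj
    have h := hstep j hj1 hj2
    have hne : ((2:ℝ)/3 * τ) ≠ 0 := by positivity
    have hv : v j = τ⁻¹ • (m (j + 1) - m j)
        + (2 * τ)⁻¹ • (m (j + 1) - (2 : ℝ) • m j + m (j - 1)) := by
      apply smul_right_injective V hne
      show ((2:ℝ)/3 * τ) • v j = ((2:ℝ)/3 * τ) • (τ⁻¹ • (m (j + 1) - m j)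
        + (2 * τ)⁻¹ • (m (j + 1) - (2 : ℝ) • m j + m (j - 1)))
      have h3 : ((2:ℝ)/3 * τ) • v j = m (j + 1) - (4/3 : ℝ) • m j + (1/3 : ℝ) • m (j - 1) := by
        rw [h]; module
      rw [h3]
      match_scalars <;> (field_simp; try ring)
    have hGv : G (v j) = τ⁻¹ • (G (m (j + 1)) - G (m j))
        + (2 * τ)⁻¹ • (G (m (j + 1)) - (2 : ℝ) • G (m j) + G (m (j - 1))) := by
      rw [hv]; simp
    have ht := htest j hj1 hj2
    have hcs : ⟪f (j + 1), v j⟫ ≤ ‖f (j + 1)‖ * ‖v j‖ := real_inner_le_norm _ _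
    have h4 : (0:ℝ) < 4 * α := by linarith
    have hyv : ‖f (j + 1)‖ * ‖v j‖ - α * ‖v j‖ ^ 2 ≤ ‖f (j + 1)‖ ^ 2 / (4 * α) := by
      have h0 : (0:ℝ) ≤ (‖f (j + 1)‖ - 2 * α * ‖v j‖) ^ 2 / (4 * α) := by positivity
      have he : (‖f (j + 1)‖ - 2 * α * ‖v j‖) ^ 2 / (4 * α)
          = ‖f (j + 1)‖ ^ 2 / (4 * α) + α * ‖v j‖ ^ 2 - ‖f (j + 1)‖ * ‖v j‖ := by
        field_simp; ring
      linarith [he ▸ h0]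
    have hmain : lam ^ 2 * ⟪G (m (j + 1)), τ⁻¹ • (G (m (j + 1)) - G (m j))
        + (2 * τ)⁻¹ • (G (m (j + 1)) - (2 : ℝ) • G (m j) + G (m (j - 1)))⟫
        ≤ ‖f (j + 1)‖ ^ 2 / (4 * α) := by
      rw [← hGv]
      linarith
    have hkey := bdf2_key_step lam τ α hα hτ (G (m (j + 1))) (G (m j))
      (G (m (j + 1)) - (2 : ℝ) • G (m j) + G (m (j - 1))) (‖f (j + 1)‖ ^ 2)
      (by positivity) hmain
    have e1 : G (τ⁻¹ • (m (j + 1) - m j)) = τ⁻¹ • (G (m (j + 1)) - G (m j)) := by simp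
    have e2 : G ((τ ^ 2)⁻¹ • (m (j + 1) - (2 : ℝ) • m j + m (j - 1)))
        = (τ ^ 2)⁻¹ • (G (m (j + 1)) - (2 : ℝ) • G (m j) + G (m (j - 1))) := by simp
    rw [e1, e2]
    exact hkey
  have hsum := Finset.sum_le_sum key
  -- telescoping
  have hIcc : S = Finset.Ico 1 n := by
    rw [hS, ← Finset.Ico_add_one_right_eq_Icc]
    congr 1
    omega
  have htel : ∑ j ∈ S, (‖G (m (j + 1))‖ ^ 2 - ‖G (m j)‖ ^ 2)
      = ‖G (m n)‖ ^ 2 - ‖G (m 1)‖ ^ 2 := by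
    rw [hIcc, Finset.sum_Ico_eq_sub _ (by omega : 1 ≤ n),
      Finset.sum_range_sub (fun i => ‖G (m i)‖ ^ 2),
      Finset.sum_range_sub (fun i => ‖G (m i)‖ ^ 2)]
    ring
  have splitL : ∑ j ∈ S,
      ((lam ^ 2 / 2) * τ ^ ((1:ℝ)/2) * (‖G (m (j + 1))‖ ^ 2 - ‖G (m j)‖ ^ 2)
        + (lam ^ 2 / 2) * τ ^ ((5:ℝ)/2) * ‖G (τ⁻¹ • (m (j + 1) - m j))‖ ^ 2)
      = (lam ^ 2 / 2) * τ ^ ((1:ℝ)/2) * (‖G (m n)‖ ^ 2 - ‖G (m 1)‖ ^ 2)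
        + (lam ^ 2 / 2) * τ ^ ((5:ℝ)/2) * ∑ j ∈ S, ‖G (τ⁻¹ • (m (j + 1) - m j))‖ ^ 2 := by
    rw [Finset.sum_add_distrib, ← Finset.mul_sum, ← Finset.mul_sum, htel]
  have splitR : ∑ j ∈ S,
      ((τ ^ ((3:ℝ)/2) / (4 * α)) * ‖f (j + 1)‖ ^ 2
        + (lam ^ 2 / 4) * τ * ‖G (m (j + 1))‖ ^ 2
        + (lam ^ 2 / 4) * τ ^ 4
            * ‖G ((τ ^ 2)⁻¹ • (m (j + 1) - (2 : ℝ) • m j + m (j - 1)))‖ ^ 2)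
      = (τ ^ ((3:ℝ)/2) / (4 * α)) * ∑ j ∈ S, ‖f (j + 1)‖ ^ 2
        + (lam ^ 2 / 4) * τ * ∑ j ∈ S, ‖G (m (j + 1))‖ ^ 2
        + (lam ^ 2 / 4) * τ ^ 4 * ∑ j ∈ S,
            ‖G ((τ ^ 2)⁻¹ • (m (j + 1) - (2 : ℝ) • m j + m (j - 1)))‖ ^ 2 := by
    rw [Finset.sum_add_distrib, Finset.sum_add_distrib, ← Finset.mul_sum, ← Finset.mul_sum,
      ← Finset.mul_sum]
  rw [splitL, splitR] at hsum
  linarith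
end
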